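/- arXiv:2401.17708 — 2 statements merged into one kernel-verified Lean document; each statement's English description precedes it below -/
import Mathlib

section
/- If D is stable, then there exist a continuous function c: [0,∞) → [0,∞) with lim_{t→∞} c(t) = 0 and a constant k > 0 such that: for every continuous h: [0,∞) → ℝ^m, every φ ∈ BU with Dφ = h(0), and every continuous x: ℝ → ℝ^m with x_0 = φ and Dx_t = h(t) for all t ≥ 0, one has ‖x(t)‖ ≤ c(t)‖φ‖_∞ + k · sup_{0≤u≤t} ‖h(u)‖ for each t ≥ 0. -/
open MeasureTheory Filter Set

/-- `x` is bounded and uniformly continuous on `(-∞,0]` (membership in `BU`,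
where only the restriction of `x` to `(-∞,0]` is relevant). -/
def IsBU (m : ℕ) (x : ℝ → Fin m → ℝ) : Prop :=
  (∃ C : ℝ, ∀ s : ℝ, s ≤ 0 → ‖x s‖ ≤ C) ∧
  ∀ ε > (0:ℝ), ∃ δ > (0:ℝ), ∀ s : ℝ, s ≤ 0 → ∀ s' : ℝ, s' ≤ 0 →
    |s - s'| < δ → ‖x s - x s'‖ < ε

/-- the supremum norm `‖x‖_∞ = sup_{s ≤ 0} ‖x(s)‖`. -/
noncomputable def supNorm (m : ℕ) (x : ℝ → Fin m → ℝ) : ℝ :=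
  ⨆ s : Set.Iic (0:ℝ), ‖x (s : ℝ)‖

/-- time shift: `shift m x t = x_t`, where `x_t(s) = x(t+s)`. -/
def shift (m : ℕ) (x : ℝ → Fin m → ℝ) (t : ℝ) : ℝ → Fin m → ℝ :=
  fun s => x (t + s)

/-- The operator `Dx = x(0) - ∫_{-∞}^0 [dν(s)] x(s)`, where the matrix of real
(signed) Borel measures `ν` is given through a positive part `νp` and a
negative part `νn` (Jordan decomposition), i.e. `ν i j = νp i j - νn i j`. -/
noncomputable def Dop (m : ℕ) (νp νn : Fin m → Fin m → Measure ℝ)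
    (x : ℝ → Fin m → ℝ) : Fin m → ℝ :=
  fun i => x 0 i - ∑ j : Fin m,
    ((∫ s in Set.Iic (0:ℝ), x s j ∂(νp i j)) - ∫ s in Set.Iic (0:ℝ), x s j ∂(νn i j))

/-- the measures `ν_ij` have finite total variation and `|ν_ij|({0}) = 0`. -/
def NuCond (m : ℕ) (νp νn : Fin m → Fin m → Measure ℝ) : Prop :=
  (∀ i j, νp i j Set.univ ≠ ⊤) ∧ (∀ i j, νn i j Set.univ ≠ ⊤) ∧
  (∀ i j, νp i j {0} = 0) ∧ (∀ i j, νn i j {0} = 0)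

/-- `D` is stable: there is a continuous `c : [0,∞) → [0,∞)` with `c(t) → 0`
as `t → ∞` such that every continuous `x : ℝ → ℝ^m` with `x_0 ∈ BU` and
`D x_t = 0` for all `t ≥ 0` satisfies `‖x(t)‖ ≤ c(t) ‖x_0‖_∞` for all `t ≥ 0`. -/
def IsStableOp (m : ℕ) (D : (ℝ → Fin m → ℝ) → Fin m → ℝ) : Prop :=
  ∃ c : ℝ → ℝ, ContinuousOn c (Set.Ici 0) ∧ (∀ t : ℝ, 0 ≤ t → 0 ≤ c t) ∧
    Filter.Tendsto c Filter.atTop (nhds 0) ∧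
    ∀ x : ℝ → Fin m → ℝ, Continuous x → IsBU m x →
      (∀ t : ℝ, 0 ≤ t → D (shift m x t) = 0) →
      ∀ t : ℝ, 0 ≤ t → ‖x t‖ ≤ c t * supNorm m x

/-- the convolution operator `D̂`, `(D̂x)(s) = D x_s`. -/
noncomputable def Dhat (m : ℕ) (νp νn : Fin m → Fin m → Measure ℝ)
    (x : ℝ → Fin m → ℝ) : ℝ → Fin m → ℝ :=
  fun s => Dop m νp νn (shift m x s)

/-- the seminorm `‖x‖_n = sup_{s ∈ [-n,0]} ‖x(s)‖`. -/
noncomputable def normOn (m : ℕ) (n : ℕ) (x : ℝ → Fin m → ℝ) : ℝ :=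
  ⨆ s : Set.Icc (-(n:ℝ)) 0, ‖x (s : ℝ)‖

/-- the compact-open metric
`d(x,y) = ∑_{n ≥ 1} 2⁻ⁿ ‖x-y‖_n / (1 + ‖x-y‖_n)`. -/
noncomputable def coDist (m : ℕ) (x y : ℝ → Fin m → ℝ) : ℝ :=
  ∑' n : ℕ, (1/2 : ℝ)^(n+1) *
    (normOn m (n+1) (fun s => x s - y s)) / (1 + normOn m (n+1) (fun s => x s - y s))

/-- `sup_{0 ≤ u ≤ t} ‖h(u)‖`. -/
noncomputable def supOn (m : ℕ) (h : ℝ → Fin m → ℝ) (t : ℝ) : ℝ :=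
  ⨆ u : Set.Icc (0:ℝ) t, ‖h (u : ℝ)‖

/-- the order `x ≤_D y`, i.e. `D x_s ≤ D y_s` (componentwise) for all `s ≤ 0`. -/
def leD (m : ℕ) (νp νn : Fin m → Fin m → Measure ℝ) (x y : ℝ → Fin m → ℝ) : Prop :=
  ∀ s : ℝ, s ≤ 0 → ∀ i, Dhat m νp νn x s i ≤ Dhat m νp νn y s i

-- ====================== auxiliary development ======================

namespace St4

instance : Nonempty (Set.Iic (0:ℝ)) := ⟨⟨0, Set.mem_Iic.2 le_rfl⟩⟩

/-- continuous and bounded on every left half-line -/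
def Nice (m : ℕ) (a : ℝ → Fin m → ℝ) : Prop :=
  Continuous a ∧ ∀ B : ℝ, ∃ C : ℝ, ∀ s ≤ B, ‖a s‖ ≤ C

lemma nice_of {m : ℕ} {a : ℝ → Fin m → ℝ} (hc : Continuous a)
    (h0 : ∃ C, ∀ s ≤ (0:ℝ), ‖a s‖ ≤ C) : Nice m a := by
  refine ⟨hc, fun B => ?_⟩
  obtain ⟨C0, hC0⟩ := h0
  obtain ⟨C1, hC1⟩ := isCompact_Icc.exists_bound_of_continuousOn
    (s := Icc (0:ℝ) (max B 0)) hc.continuousOn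
  refine ⟨max C0 C1, fun s hs => ?_⟩
  rcases le_or_gt s 0 with h | h
  · exact (hC0 s h).trans (le_max_left _ _)
  · exact (hC1 s ⟨h.le, le_trans hs (le_max_left _ _)⟩).trans (le_max_right _ _)

lemma nice_add {m : ℕ} {a b : ℝ → Fin m → ℝ} (ha : Nice m a) (hb : Nice m b) :
    Nice m (fun u => a u + b u) := by
  refine ⟨ha.1.add hb.1, fun B => ?_⟩
  obtain ⟨C, hC⟩ := ha.2 B; obtain ⟨C', hC'⟩ := hb.2 B
  exact ⟨C + C', fun s hs => (norm_add_le _ _).trans (add_le_add (hC s hs) (hC' s hs))⟩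

lemma nice_sub {m : ℕ} {a b : ℝ → Fin m → ℝ} (ha : Nice m a) (hb : Nice m b) :
    Nice m (fun u => a u - b u) := by
  refine ⟨ha.1.sub hb.1, fun B => ?_⟩
  obtain ⟨C, hC⟩ := ha.2 B; obtain ⟨C', hC'⟩ := hb.2 B
  exact ⟨C + C', fun s hs => (norm_sub_le _ _).trans (add_le_add (hC s hs) (hC' s hs))⟩

lemma nice_const {m : ℕ} (u : Fin m → ℝ) : Nice m (fun _ => u) :=
  ⟨continuous_const, fun _ => ⟨‖u‖, fun _ _ => le_rfl⟩⟩

lemma nice_shift {m : ℕ} {a : ℝ → Fin m → ℝ} (ha : Nice m a) (b : ℝ) :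
    Nice m (fun u => a (b + u)) := by
  refine ⟨ha.1.comp (continuous_const.add continuous_id), fun B => ?_⟩
  obtain ⟨C, hC⟩ := ha.2 (b + B)
  exact ⟨C, fun s hs => hC _ (by linarith)⟩

lemma integrableOn_of_bound (μ : Measure ℝ) [IsFiniteMeasure μ] (g : ℝ → ℝ)
    (hg : Continuous g) (C : ℝ) (hb : ∀ s ≤ (0:ℝ), |g s| ≤ C) :
    IntegrableOn g (Set.Iic (0:ℝ)) μ := by
  refine Integrable.mono' (integrable_const C) hg.aestronglyMeasurable.restrict ?_
  rw [ae_restrict_iff' measurableSet_Iic]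
  exact ae_of_all _ fun s hs => by simpa [Real.norm_eq_abs] using hb s hs

lemma abs_setIntegral_le (μ : Measure ℝ) [IsFiniteMeasure μ] (g : ℝ → ℝ)
    (hg : Continuous g) (γ M : ℝ) (hγ : 0 ≤ γ) (hM : 0 ≤ M)
    (hb : ∀ s ≤ (0:ℝ), |g s| ≤ M * Real.exp (γ * s)) :
    |∫ s in Set.Iic (0:ℝ), g s ∂μ| ≤ M * ∫ s in Set.Iic (0:ℝ), Real.exp (γ * s) ∂μ := by
  have hb' : ∀ s ≤ (0:ℝ), |g s| ≤ M := fun s hs => (hb s hs).trans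
    (by nlinarith [Real.exp_le_one_iff.2 (mul_nonpos_of_nonneg_of_nonpos hγ hs), Real.exp_pos (γ*s)])
  have hgi : IntegrableOn g (Set.Iic (0:ℝ)) μ := integrableOn_of_bound μ g hg M hb'
  have hei : IntegrableOn (fun s => M * Real.exp (γ * s)) (Set.Iic (0:ℝ)) μ := by
    refine integrableOn_of_bound μ _ (by continuity) M fun s hs => ?_
    have h1 : Real.exp (γ * s) ≤ 1 := Real.exp_le_one_iff.2 (mul_nonpos_of_nonneg_of_nonpos hγ hs)
    rw [abs_of_nonneg (by positivity)]
    nlinarith [Real.exp_pos (γ*s)]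
  calc |∫ s in Set.Iic (0:ℝ), g s ∂μ| ≤ ∫ s in Set.Iic (0:ℝ), |g s| ∂μ := by
        simpa [Real.norm_eq_abs] using norm_integral_le_integral_norm (μ := μ.restrict (Iic 0)) g
    _ ≤ ∫ s in Set.Iic (0:ℝ), M * Real.exp (γ * s) ∂μ :=
        setIntegral_mono_on hgi.abs hei measurableSet_Iic fun s hs => hb s hs
    _ = M * ∫ s in Set.Iic (0:ℝ), Real.exp (γ * s) ∂μ := integral_const_mul _ _

lemma setIntegral_exp_nonneg (μ : Measure ℝ) (γ : ℝ) :
    0 ≤ ∫ s in Set.Iic (0:ℝ), Real.exp (γ * s) ∂μ :=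
  setIntegral_nonneg measurableSet_Iic fun s _ => (Real.exp_pos _).le

end St4

-- Lam and Dop algebra
namespace St4

variable {m : ℕ} (νp νn : Fin m → Fin m → Measure ℝ)

/-- the matrix `I - ν((-∞,0])` acting on `ℝ^m` -/
noncomputable def Lam (u : Fin m → ℝ) : Fin m → ℝ :=
  fun i => u i - ∑ j : Fin m,
    (((νp i j (Set.Iic (0:ℝ))).toReal - (νn i j (Set.Iic (0:ℝ))).toReal) * u j)

variable {νp νn}

lemma dop_shift_apply (a : ℝ → Fin m → ℝ) (t : ℝ) (i : Fin m) :
    Dop m νp νn (shift m a t) i = a t i - ∑ j : Fin m,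
      ((∫ s in Set.Iic (0:ℝ), a (t + s) j ∂(νp i j))
        - ∫ s in Set.Iic (0:ℝ), a (t + s) j ∂(νn i j)) := by
  simp [Dop, shift]

section fin
variable (hp : ∀ i j, νp i j Set.univ ≠ ⊤) (hn : ∀ i j, νn i j Set.univ ≠ ⊤)

lemma integrableOn_shift_apply {a : ℝ → Fin m → ℝ} (ha : Nice m a) (t : ℝ) (j : Fin m)
    (μ : Measure ℝ) (hμ : μ Set.univ ≠ ⊤) :
    IntegrableOn (fun s => a (t + s) j) (Set.Iic (0:ℝ)) μ := by
  haveI : IsFiniteMeasure μ := ⟨lt_top_iff_ne_top.2 hμ⟩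
  obtain ⟨C, hC⟩ := ha.2 t
  refine integrableOn_of_bound μ _
    ((continuous_apply j).comp (ha.1.comp (continuous_const.add continuous_id))) C fun s hs => ?_
  calc |a (t + s) j| ≤ ‖a (t + s)‖ := by simpa [Real.norm_eq_abs] using norm_le_pi_norm (a (t+s)) j
    _ ≤ C := hC _ (by linarith)

include hp hn in
lemma dop_shift_add {a b : ℝ → Fin m → ℝ} (ha : Nice m a) (hb : Nice m b) (t : ℝ) (i : Fin m) :
    Dop m νp νn (shift m (fun u => a u + b u) t) i
      = Dop m νp νn (shift m a t) i + Dop m νp νn (shift m b t) i := by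
  rw [dop_shift_apply, dop_shift_apply, dop_shift_apply]
  have hint : ∀ j : Fin m, ∀ μ : Measure ℝ, μ Set.univ ≠ ⊤ →
      (∫ s in Set.Iic (0:ℝ), (fun u => a u + b u) (t + s) j ∂μ)
        = (∫ s in Set.Iic (0:ℝ), a (t + s) j ∂μ) + ∫ s in Set.Iic (0:ℝ), b (t + s) j ∂μ := by
    intro j μ hμ
    have h1 := integrableOn_shift_apply ha t j μ hμ
    have h2 := integrableOn_shift_apply hb t j μ hμ
    have : (∫ s in Set.Iic (0:ℝ), (a (t + s) j + b (t + s) j) ∂μ)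
        = (∫ s in Set.Iic (0:ℝ), a (t + s) j ∂μ) + ∫ s in Set.Iic (0:ℝ), b (t + s) j ∂μ :=
      integral_add h1 h2
    simpa using this
  have hsum : ∀ j ∈ Finset.univ (α := Fin m), (((∫ s in Set.Iic (0:ℝ), (fun u => a u + b u) (t + s) j ∂(νp i j))
        - ∫ s in Set.Iic (0:ℝ), (fun u => a u + b u) (t + s) j ∂(νn i j)))
      = ((∫ s in Set.Iic (0:ℝ), a (t + s) j ∂(νp i j)) - ∫ s in Set.Iic (0:ℝ), a (t + s) j ∂(νn i j))
        + ((∫ s in Set.Iic (0:ℝ), b (t + s) j ∂(νp i j)) - ∫ s in Set.Iic (0:ℝ), b (t + s) j ∂(νn i j)) := by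
    intro j _
    rw [hint j _ (hp i j), hint j _ (hn i j)]; ring
  rw [Finset.sum_congr rfl hsum, Finset.sum_add_distrib]
  simp only [Pi.add_apply]
  ring

include hp hn in
lemma dop_shift_sub {a b : ℝ → Fin m → ℝ} (ha : Nice m a) (hb : Nice m b) (t : ℝ) (i : Fin m) :
    Dop m νp νn (shift m (fun u => a u - b u) t) i
      = Dop m νp νn (shift m a t) i - Dop m νp νn (shift m b t) i := by
  rw [dop_shift_apply, dop_shift_apply, dop_shift_apply]
  have hint : ∀ j : Fin m, ∀ μ : Measure ℝ, μ Set.univ ≠ ⊤ →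
      (∫ s in Set.Iic (0:ℝ), (fun u => a u - b u) (t + s) j ∂μ)
        = (∫ s in Set.Iic (0:ℝ), a (t + s) j ∂μ) - ∫ s in Set.Iic (0:ℝ), b (t + s) j ∂μ := by
    intro j μ hμ
    have h1 := integrableOn_shift_apply ha t j μ hμ
    have h2 := integrableOn_shift_apply hb t j μ hμ
    have : (∫ s in Set.Iic (0:ℝ), (a (t + s) j - b (t + s) j) ∂μ)
        = (∫ s in Set.Iic (0:ℝ), a (t + s) j ∂μ) - ∫ s in Set.Iic (0:ℝ), b (t + s) j ∂μ :=
      integral_sub h1 h2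
    simpa using this
  have hsum : ∀ j ∈ Finset.univ (α := Fin m), (((∫ s in Set.Iic (0:ℝ), (fun u => a u - b u) (t + s) j ∂(νp i j))
        - ∫ s in Set.Iic (0:ℝ), (fun u => a u - b u) (t + s) j ∂(νn i j)))
      = ((∫ s in Set.Iic (0:ℝ), a (t + s) j ∂(νp i j)) - ∫ s in Set.Iic (0:ℝ), a (t + s) j ∂(νn i j))
        - ((∫ s in Set.Iic (0:ℝ), b (t + s) j ∂(νp i j)) - ∫ s in Set.Iic (0:ℝ), b (t + s) j ∂(νn i j)) := by
    intro j _
    rw [hint j _ (hp i j), hint j _ (hn i j)]; ring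
  rw [Finset.sum_congr rfl hsum, Finset.sum_sub_distrib]
  simp only [Pi.sub_apply]
  ring

end fin

lemma dop_shift_const (u : Fin m → ℝ) (t : ℝ) (i : Fin m) :
    Dop m νp νn (shift m (fun _ => u) t) i = Lam νp νn u i := by
  rw [dop_shift_apply, Lam]
  simp [setIntegral_const, smul_eq_mul, sub_mul, measureReal_def]

end St4

namespace St4

variable {m : ℕ} {νp νn : Fin m → Fin m → Measure ℝ}

lemma continuous_setIntegral_shift (μ : Measure ℝ) (hμ : μ Set.univ ≠ ⊤) (g : ℝ → ℝ)
    (hgc : Continuous g) (hgb : ∀ B : ℝ, ∃ C, ∀ s ≤ B, |g s| ≤ C) :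
    Continuous fun t => ∫ s in Set.Iic (0:ℝ), g (t + s) ∂μ := by
  haveI : IsFiniteMeasure μ := ⟨lt_top_iff_ne_top.2 hμ⟩
  rw [continuous_iff_continuousAt]
  intro t₀
  obtain ⟨C, hC⟩ := hgb (t₀ + 1)
  refine continuousAt_of_dominated (bound := fun _ => C) ?_ ?_ (integrable_const C) ?_
  · exact Eventually.of_forall fun t =>
      ((hgc.comp (continuous_const.add continuous_id)).aestronglyMeasurable).restrict
  · have hev : ∀ᶠ t in nhds t₀, t ≤ t₀ + 1 :=
      eventually_of_mem (Iio_mem_nhds (lt_add_one t₀)) fun t ht => le_of_lt ht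
    filter_upwards [hev] with t ht
    rw [ae_restrict_iff' measurableSet_Iic]
    refine ae_of_all _ fun s hs => ?_
      
    have hs' : s ≤ 0 := hs
    simpa [Real.norm_eq_abs] using hC (t + s) (by linarith)
  · exact ae_of_all _ fun s => ((hgc.comp (continuous_id.add continuous_const)).continuousAt)

lemma continuous_dop_shift (hp : ∀ i j, νp i j Set.univ ≠ ⊤) (hn : ∀ i j, νn i j Set.univ ≠ ⊤)
    {a : ℝ → Fin m → ℝ} (ha : Nice m a) (i : Fin m) :
    Continuous fun t => Dop m νp νn (shift m a t) i := by
  have habs : ∀ j : Fin m, ∀ B : ℝ, ∃ C, ∀ s ≤ B, |a s j| ≤ C := by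
    intro j B
    obtain ⟨C, hC⟩ := ha.2 B
    exact ⟨C, fun s hs => le_trans (by simpa [Real.norm_eq_abs] using norm_le_pi_norm (a s) j) (hC s hs)⟩
  have : (fun t => Dop m νp νn (shift m a t) i) = fun t => a t i - ∑ j : Fin m,
      ((∫ s in Set.Iic (0:ℝ), a (t + s) j ∂(νp i j))
        - ∫ s in Set.Iic (0:ℝ), a (t + s) j ∂(νn i j)) :=
    funext fun t => dop_shift_apply a t i
  rw [this]
  refine ((continuous_apply i).comp ha.1).sub (continuous_finset_sum _ fun j _ => Continuous.sub ?_ ?_)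
  · exact continuous_setIntegral_shift (νp i j) (hp i j) _
      ((continuous_apply j).comp ha.1) (habs j)
  · exact continuous_setIntegral_shift (νn i j) (hn i j) _
      ((continuous_apply j).comp ha.1) (habs j)

/-- total-variation-type constant -/
noncomputable def Vtot (νp νn : Fin m → Fin m → Measure ℝ) : ℝ :=
  ∑ i : Fin m, ∑ j : Fin m,
    ((νp i j (Set.Iic (0:ℝ))).toReal + (νn i j (Set.Iic (0:ℝ))).toReal)

lemma Vtot_nonneg : 0 ≤ Vtot νp νn :=
  Finset.sum_nonneg fun _ _ => Finset.sum_nonneg fun _ _ => by positivity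

lemma abs_dop_shift_le (hp : ∀ i j, νp i j Set.univ ≠ ⊤) (hn : ∀ i j, νn i j Set.univ ≠ ⊤)
    {a : ℝ → Fin m → ℝ} (ha : Continuous a) {C : ℝ} (hC : 0 ≤ C)
    (hb : ∀ s, ‖a s‖ ≤ C) (t : ℝ) (i : Fin m) :
    |Dop m νp νn (shift m a t) i| ≤ C * (1 + Vtot νp νn) := by
  have key : ∀ j : Fin m, ∀ μ : Measure ℝ, μ Set.univ ≠ ⊤ →
      |∫ s in Set.Iic (0:ℝ), a (t + s) j ∂μ| ≤ C * (μ (Set.Iic (0:ℝ))).toReal := by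
    intro j μ hμ
    haveI : IsFiniteMeasure μ := ⟨lt_top_iff_ne_top.2 hμ⟩
    have h := abs_setIntegral_le μ (fun s => a (t + s) j)
      ((continuous_apply j).comp (ha.comp (continuous_const.add continuous_id))) 0 C le_rfl hC
      (fun s _ => by
        simpa using le_trans (by simpa [Real.norm_eq_abs] using norm_le_pi_norm (a (t+s)) j) (hb (t+s)))
    have h2 : (∫ s in Set.Iic (0:ℝ), Real.exp (0 * s) ∂μ) = (μ (Set.Iic (0:ℝ))).toReal := by
      simp [setIntegral_const, measureReal_def]
    rw [h2] at h; exact h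
  rw [dop_shift_apply]
  have h1 : |a t i| ≤ C := le_trans (by simpa [Real.norm_eq_abs] using norm_le_pi_norm (a t) i) (hb t)
  have h2 : |∑ j : Fin m, ((∫ s in Set.Iic (0:ℝ), a (t + s) j ∂(νp i j))
      - ∫ s in Set.Iic (0:ℝ), a (t + s) j ∂(νn i j))| ≤ C * Vtot νp νn := by
    calc |∑ j : Fin m, ((∫ s in Set.Iic (0:ℝ), a (t + s) j ∂(νp i j))
        - ∫ s in Set.Iic (0:ℝ), a (t + s) j ∂(νn i j))|
        ≤ ∑ j : Fin m, |((∫ s in Set.Iic (0:ℝ), a (t + s) j ∂(νp i j))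
          - ∫ s in Set.Iic (0:ℝ), a (t + s) j ∂(νn i j))| := Finset.abs_sum_le_sum_abs _ _
      _ ≤ ∑ j : Fin m, (C * (νp i j (Set.Iic (0:ℝ))).toReal + C * (νn i j (Set.Iic (0:ℝ))).toReal) := by
          refine Finset.sum_le_sum fun j _ => ?_
          have := abs_sub _ _ |>.trans (add_le_add (key j _ (hp i j)) (key j _ (hn i j)))
          exact this
      _ = C * ∑ j : Fin m, ((νp i j (Set.Iic (0:ℝ))).toReal + (νn i j (Set.Iic (0:ℝ))).toReal) := by
          rw [Finset.mul_sum]; exact Finset.sum_congr rfl fun j _ => by ring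
      _ ≤ C * Vtot νp νn := by
          refine mul_le_mul_of_nonneg_left ?_ hC
          exact Finset.single_le_sum (f := fun i => ∑ j : Fin m,
            ((νp i j (Set.Iic (0:ℝ))).toReal + (νn i j (Set.Iic (0:ℝ))).toReal))
            (fun i _ => Finset.sum_nonneg fun j _ => by positivity) (Finset.mem_univ i)
  calc |a t i - ∑ j : Fin m, _| ≤ |a t i| + |∑ j : Fin m, ((∫ s in Set.Iic (0:ℝ), a (t + s) j ∂(νp i j))
      - ∫ s in Set.Iic (0:ℝ), a (t + s) j ∂(νn i j))| := abs_sub _ _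
    _ ≤ C + C * Vtot νp νn := add_le_add h1 h2
    _ = C * (1 + Vtot νp νn) := by ring

end St4

namespace St4

variable {m : ℕ} {νp νn : Fin m → Fin m → Measure ℝ}

lemma supNorm_le {x : ℝ → Fin m → ℝ} {C : ℝ} (h : ∀ s ≤ (0:ℝ), ‖x s‖ ≤ C) :
    supNorm m x ≤ C :=
  ciSup_le fun s => h s s.2

lemma le_supNorm {x : ℝ → Fin m → ℝ} {C : ℝ} (h : ∀ s ≤ (0:ℝ), ‖x s‖ ≤ C)
    {s : ℝ} (hs : s ≤ 0) : ‖x s‖ ≤ supNorm m x := by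
  refine le_ciSup (f := fun s : Set.Iic (0:ℝ) => ‖x s‖) ?_ ⟨s, hs⟩
  refine ⟨C, ?_⟩
  rintro y ⟨⟨u, hu⟩, rfl⟩
  exact h u hu

lemma supNorm_nonneg (x : ℝ → Fin m → ℝ) : 0 ≤ supNorm m x :=
  Real.iSup_nonneg fun _ => norm_nonneg _

lemma supOn_nonneg (h : ℝ → Fin m → ℝ) (t : ℝ) : 0 ≤ supOn m h t :=
  Real.iSup_nonneg fun _ => norm_nonneg _

lemma le_supOn {h : ℝ → Fin m → ℝ} {t0 : ℝ} {C : ℝ} (hb : ∀ u ∈ Set.Icc (0:ℝ) t0, ‖h u‖ ≤ C)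
    {u : ℝ} (hu : u ∈ Set.Icc (0:ℝ) t0) : ‖h u‖ ≤ supOn m h t0 := by
  refine le_ciSup (f := fun u : Set.Icc (0:ℝ) t0 => ‖h u‖) ⟨C, ?_⟩ ⟨u, hu⟩
  rintro y ⟨⟨v, hv⟩, rfl⟩
  exact hb v hv

/-- uniform continuity on left half-lines for continuous functions vanishing on `(-∞,0]` -/
lemma uc_helper {z : ℝ → Fin m → ℝ} (hz : Continuous z) (hz0 : ∀ s ≤ (0:ℝ), z s = 0)
    (b : ℝ) {ε : ℝ} (hε : 0 < ε) :
    ∃ δ > (0:ℝ), ∀ u ≤ b, ∀ u' ≤ b, |u - u'| < δ → ‖z u - z u'‖ < ε := by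
  have huc : UniformContinuousOn z (Set.Icc (-1) (max b 1)) :=
    isCompact_Icc.uniformContinuousOn_of_continuous hz.continuousOn
  rw [Metric.uniformContinuousOn_iff] at huc
  obtain ⟨δ, hδ, hd⟩ := huc ε hε
  refine ⟨min δ 1, by positivity, fun u hu u' hu' hlt => ?_⟩
  rcases le_or_gt u 0 with h1 | h1 <;> rcases le_or_gt u' 0 with h2 | h2
  · simp [hz0 u h1, hz0 u' h2, hε]
  · have h3 : u ∈ Set.Icc (-1:ℝ) (max b 1) := by
      constructor
      · have : |u - u'| < 1 := lt_of_lt_of_le hlt (min_le_right _ _)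
        rw [abs_lt] at this; linarith [le_max_right b 1]
      · exact le_trans h1 (by positivity)
    have h4 : u' ∈ Set.Icc (-1:ℝ) (max b 1) :=
      ⟨by linarith, le_trans hu' (le_max_left _ _)⟩
    have := hd u h3 u' h4 (by rw [Real.dist_eq]; exact lt_of_lt_of_le hlt (min_le_left _ _))
    rwa [dist_eq_norm] at this
  · have h4 : u' ∈ Set.Icc (-1:ℝ) (max b 1) := by
      constructor
      · have : |u - u'| < 1 := lt_of_lt_of_le hlt (min_le_right _ _)
        rw [abs_lt] at this; linarith
      · exact le_trans h2 (by positivity)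
    have h3 : u ∈ Set.Icc (-1:ℝ) (max b 1) :=
      ⟨by linarith, le_trans hu (le_max_left _ _)⟩
    have := hd u h3 u' h4 (by rw [Real.dist_eq]; exact lt_of_lt_of_le hlt (min_le_left _ _))
    rwa [dist_eq_norm] at this
  · have h3 : u ∈ Set.Icc (-1:ℝ) (max b 1) :=
      ⟨by linarith, le_trans hu (le_max_left _ _)⟩
    have h4 : u' ∈ Set.Icc (-1:ℝ) (max b 1) :=
      ⟨by linarith, le_trans hu' (le_max_left _ _)⟩
    have := hd u h3 u' h4 (by rw [Real.dist_eq]; exact lt_of_lt_of_le hlt (min_le_left _ _))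
    rwa [dist_eq_norm] at this

lemma gamma_exists (hν : NuCond m νp νn) :
    ∃ γ : ℝ, 0 ≤ γ ∧ (∑ i : Fin m, ∑ j : Fin m,
      ((∫ s in Set.Iic (0:ℝ), Real.exp (γ * s) ∂(νp i j))
        + ∫ s in Set.Iic (0:ℝ), Real.exp (γ * s) ∂(νn i j))) ≤ 1/4 := by
  obtain ⟨hp, hn, hp0, hn0⟩ := hν
  have key : ∀ μ : Measure ℝ, μ Set.univ ≠ ⊤ → μ {0} = 0 →
      Tendsto (fun n : ℕ => ∫ s in Set.Iic (0:ℝ), Real.exp ((n:ℝ) * s) ∂μ) atTop (nhds 0) := by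
    intro μ hμ hμ0
    haveI : IsFiniteMeasure μ := ⟨lt_top_iff_ne_top.2 hμ⟩
    have h0 : (∫ s in Set.Iic (0:ℝ), (0:ℝ) ∂μ) = 0 := integral_zero _ _
    suffices H : Tendsto (fun n : ℕ => ∫ s in Set.Iic (0:ℝ), Real.exp ((n:ℝ) * s) ∂μ) atTop
        (nhds (∫ s in Set.Iic (0:ℝ), (0:ℝ) ∂μ)) by rwa [h0] at H
    refine tendsto_integral_filter_of_dominated_convergence (μ := μ.restrict (Set.Iic 0))
      (F := fun (n : ℕ) s => Real.exp ((n:ℝ) * s)) (f := fun _ => (0:ℝ)) (l := atTop)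
      (bound := fun _ => (1:ℝ)) ?_ ?_ (integrable_const 1) ?_
    · exact Eventually.of_forall fun n => (Continuous.aestronglyMeasurable
        (Real.continuous_exp.comp (continuous_const.mul continuous_id))).restrict
    · refine Eventually.of_forall fun n => ?_
      rw [ae_restrict_iff' measurableSet_Iic]
      refine ae_of_all _ fun s hs => ?_
      have hs' : s ≤ 0 := hs
      have : Real.exp ((n:ℝ) * s) ≤ 1 :=
        Real.exp_le_one_iff.2 (mul_nonpos_of_nonneg_of_nonpos (by positivity) hs')
      rw [Real.norm_eq_abs, abs_of_nonneg (Real.exp_pos _).le]; exact this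
    · have hne : ∀ᵐ s ∂μ.restrict (Set.Iic 0), s ≠ 0 := by
        rw [ae_iff]
        have : {a : ℝ | ¬ a ≠ 0} = {0} := by ext a; simp
        rw [this, Measure.restrict_apply (measurableSet_singleton 0)]
        exact le_antisymm (le_trans (measure_mono (Set.inter_subset_left)) hμ0.le) (by positivity)
      have hmem : ∀ᵐ s ∂μ.restrict (Set.Iic 0), s ∈ Set.Iic (0:ℝ) :=
        ae_restrict_mem measurableSet_Iic
      filter_upwards [hne, hmem] with s hs1 hs2
      have hs3 : s < 0 := lt_of_le_of_ne hs2 hs1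
      have : Tendsto (fun n : ℕ => (n:ℝ) * s) atTop atBot :=
        Tendsto.atTop_mul_const_of_neg hs3 tendsto_natCast_atTop_atTop
      exact Real.tendsto_exp_atBot.comp this
  have hsum : Tendsto (fun n : ℕ => ∑ i : Fin m, ∑ j : Fin m,
      ((∫ s in Set.Iic (0:ℝ), Real.exp ((n:ℝ) * s) ∂(νp i j))
        + ∫ s in Set.Iic (0:ℝ), Real.exp ((n:ℝ) * s) ∂(νn i j))) atTop (nhds 0) := by
    have : Tendsto (fun n : ℕ => ∑ i : Fin m, ∑ j : Fin m,
        ((∫ s in Set.Iic (0:ℝ), Real.exp ((n:ℝ) * s) ∂(νp i j))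
          + ∫ s in Set.Iic (0:ℝ), Real.exp ((n:ℝ) * s) ∂(νn i j))) atTop
        (nhds (∑ i : Fin m, ∑ j : Fin m, ((0:ℝ) + 0))) := by
      refine tendsto_finset_sum _ fun i _ => tendsto_finset_sum _ fun j _ => Tendsto.add ?_ ?_
      · exact key _ (hp i j) (hp0 i j)
      · exact key _ (hn i j) (hn0 i j)
    simpa using this
  obtain ⟨n, hn2⟩ := (hsum.eventually_le_const (by norm_num : (0:ℝ) < 1/4)).exists
  exact ⟨(n:ℝ), by positivity, hn2⟩

end St4

namespace St4

abbrev BCFm (m : ℕ) := BoundedContinuousFunction ℝ (Fin m → ℝ)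

variable {m : ℕ}

noncomputable def flat (W : BCFm m) : BCFm m :=
  BoundedContinuousFunction.ofNormedAddCommGroup (fun u => W u - W (min u 0))
    (W.continuous.sub (W.continuous.comp (continuous_id.min continuous_const)))
    (2 * ‖W‖) (fun u => by
      calc ‖W u - W (min u 0)‖ ≤ ‖W u‖ + ‖W (min u 0)‖ := norm_sub_le _ _
        _ ≤ 2 * ‖W‖ := by
            have h1 := W.norm_coe_le_norm u
            have h2 := W.norm_coe_le_norm (min u 0)
            linarith)

lemma flat_apply (W : BCFm m) (u : ℝ) : flat W u = W u - W (min u 0) := rfl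

lemma flat_zero_past (W : BCFm m) {u : ℝ} (hu : u ≤ 0) : flat W u = 0 := by
  rw [flat_apply, min_eq_left hu, sub_self]

lemma flat_eq {W : BCFm m} (hW : ∀ t ≤ (0:ℝ), W t = 0) (u : ℝ) : flat W u = W u := by
  rw [flat_apply, hW (min u 0) (min_le_right u 0), sub_zero]

lemma flat_sub (W W' : BCFm m) : flat (W - W') = flat W - flat W' := by
  ext u
  simp only [flat_apply, BoundedContinuousFunction.coe_sub, Pi.sub_apply]
  abel

lemma flat_norm_le (W : BCFm m) (u : ℝ) : ‖flat W u‖ ≤ 2 * ‖W‖ := by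
  rw [flat_apply]
  calc ‖W u - W (min u 0)‖ ≤ ‖W u‖ + ‖W (min u 0)‖ := norm_sub_le _ _
    _ ≤ 2 * ‖W‖ := by
        have h1 := W.norm_coe_le_norm u
        have h2 := W.norm_coe_le_norm (min u 0)
        linarith

variable (νp νn : Fin m → Fin m → Measure ℝ) (γ : ℝ)

noncomputable def IIfun (W : BCFm m) (t : ℝ) (i : Fin m) : ℝ :=
  ∑ j : Fin m, ((∫ s in Set.Iic (0:ℝ), Real.exp (γ * (t + s)) * W (t + s) j ∂(νp i j))
    - ∫ s in Set.Iic (0:ℝ), Real.exp (γ * (t + s)) * W (t + s) j ∂(νn i j))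

noncomputable def EEfun (f : ℝ → Fin m → ℝ) (W : BCFm m) : ℝ → Fin m → ℝ :=
  fun t => if t ≤ 0 then 0 else fun i =>
    Real.exp (-(γ * t)) * (IIfun νp νn γ (flat W) t i + f t i)

variable {νp νn γ}
variable (hp : ∀ i j, νp i j Set.univ ≠ ⊤) (hn : ∀ i j, νn i j Set.univ ≠ ⊤) (hγ : 0 ≤ γ)

section estimates

include hγ in
lemma II_integrand_int (W : BCFm m) (t : ℝ) (j : Fin m) (μ : Measure ℝ) (hμ : μ Set.univ ≠ ⊤) :
    IntegrableOn (fun s => Real.exp (γ * (t + s)) * W (t + s) j) (Set.Iic (0:ℝ)) μ := by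
  haveI : IsFiniteMeasure μ := ⟨lt_top_iff_ne_top.2 hμ⟩
  refine integrableOn_of_bound μ (fun s => Real.exp (γ * (t + s)) * W (t + s) j) (Continuous.mul
    (Real.continuous_exp.comp (continuous_const.mul (continuous_const.add continuous_id)))
    ((continuous_apply j).comp (W.continuous.comp (continuous_const.add continuous_id))))
    (Real.exp (γ * t) * ‖W‖) (fun s hs => ?_)
  have h1 : |W (t + s) j| ≤ ‖W‖ :=
    le_trans (by simpa [Real.norm_eq_abs] using norm_le_pi_norm (W (t+s)) j) (W.norm_coe_le_norm _)
  have h2 : Real.exp (γ * (t + s)) ≤ Real.exp (γ * t) := by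
    apply Real.exp_le_exp.2; nlinarith
  rw [abs_mul, abs_of_nonneg (Real.exp_pos _).le]
  have h3 : (0:ℝ) ≤ Real.exp (γ * (t+s)) := (Real.exp_pos _).le
  nlinarith [abs_nonneg (W (t+s) j), Real.exp_pos (γ * (t+s))]

include hγ in
lemma II_integral_abs (W : BCFm m) {M : ℝ} (hM : 0 ≤ M) (hWb : ∀ u, ‖W u‖ ≤ M)
    (t : ℝ) (j : Fin m) (μ : Measure ℝ) (hμ : μ Set.univ ≠ ⊤) :
    |∫ s in Set.Iic (0:ℝ), Real.exp (γ * (t + s)) * W (t + s) j ∂μ|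
      ≤ (Real.exp (γ * t) * M) * ∫ s in Set.Iic (0:ℝ), Real.exp (γ * s) ∂μ := by
  haveI : IsFiniteMeasure μ := ⟨lt_top_iff_ne_top.2 hμ⟩
  refine abs_setIntegral_le μ (fun s => Real.exp (γ * (t + s)) * W (t + s) j) (Continuous.mul
    (Real.continuous_exp.comp (continuous_const.mul (continuous_const.add continuous_id)))
    ((continuous_apply j).comp (W.continuous.comp (continuous_const.add continuous_id))))
    γ (Real.exp (γ * t) * M) hγ (by positivity) (fun s hs => ?_)
  have h1 : |W (t + s) j| ≤ M :=
    le_trans (by simpa [Real.norm_eq_abs] using norm_le_pi_norm (W (t+s)) j) (hWb _)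
  have h2 : Real.exp (γ * (t + s)) = Real.exp (γ * t) * Real.exp (γ * s) := by
    rw [← Real.exp_add]; ring_nf
  rw [abs_mul, abs_of_nonneg (Real.exp_pos _).le, h2]
  have e1 := (Real.exp_pos (γ * t)).le
  have e2 := (Real.exp_pos (γ * s)).le
  have := mul_le_mul_of_nonneg_left h1 (mul_nonneg e1 e2)
  nlinarith [this]

variable (hρ : (∑ i : Fin m, ∑ j : Fin m,
      ((∫ s in Set.Iic (0:ℝ), Real.exp (γ * s) ∂(νp i j))
        + ∫ s in Set.Iic (0:ℝ), Real.exp (γ * s) ∂(νn i j))) ≤ 1/4)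

include hρ in
lemma row_le (i : Fin m) : (∑ j : Fin m,
    ((∫ s in Set.Iic (0:ℝ), Real.exp (γ * s) ∂(νp i j))
      + ∫ s in Set.Iic (0:ℝ), Real.exp (γ * s) ∂(νn i j))) ≤ 1/4 := by
  refine le_trans (Finset.single_le_sum (f := fun i => ∑ j : Fin m,
    ((∫ s in Set.Iic (0:ℝ), Real.exp (γ * s) ∂(νp i j))
      + ∫ s in Set.Iic (0:ℝ), Real.exp (γ * s) ∂(νn i j)))
    (fun i _ => Finset.sum_nonneg fun j _ =>
      add_nonneg (setIntegral_exp_nonneg _ _) (setIntegral_exp_nonneg _ _))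
    (Finset.mem_univ i)) hρ

include hp hn hγ hρ in
lemma II_abs_le (W : BCFm m) {M : ℝ} (hM : 0 ≤ M) (hWb : ∀ u, ‖W u‖ ≤ M) (t : ℝ) (i : Fin m) :
    |IIfun νp νn γ W t i| ≤ Real.exp (γ * t) * M * (1/4) := by
  calc |IIfun νp νn γ W t i| ≤ ∑ j : Fin m,
      |((∫ s in Set.Iic (0:ℝ), Real.exp (γ * (t + s)) * W (t + s) j ∂(νp i j))
        - ∫ s in Set.Iic (0:ℝ), Real.exp (γ * (t + s)) * W (t + s) j ∂(νn i j))| :=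
      Finset.abs_sum_le_sum_abs _ _
    _ ≤ ∑ j : Fin m, ((Real.exp (γ * t) * M) *
        ((∫ s in Set.Iic (0:ℝ), Real.exp (γ * s) ∂(νp i j))
          + ∫ s in Set.Iic (0:ℝ), Real.exp (γ * s) ∂(νn i j))) := by
        refine Finset.sum_le_sum fun j _ => ?_
        have h := (abs_sub _ _).trans (add_le_add
          (II_integral_abs hγ W hM hWb t j _ (hp i j))
          (II_integral_abs hγ W hM hWb t j _ (hn i j)))
        calc |_| ≤ _ := h
          _ = (Real.exp (γ * t) * M) *
            ((∫ s in Set.Iic (0:ℝ), Real.exp (γ * s) ∂(νp i j))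
              + ∫ s in Set.Iic (0:ℝ), Real.exp (γ * s) ∂(νn i j)) := by ring
    _ = (Real.exp (γ * t) * M) * (∑ j : Fin m,
        ((∫ s in Set.Iic (0:ℝ), Real.exp (γ * s) ∂(νp i j))
          + ∫ s in Set.Iic (0:ℝ), Real.exp (γ * s) ∂(νn i j))) := by rw [Finset.mul_sum]
    _ ≤ Real.exp (γ * t) * M * (1/4) := by
        refine mul_le_mul_of_nonneg_left (row_le hρ i) (by positivity)

include hp hn hγ in
lemma II_sub (W W' : BCFm m) (t : ℝ) (i : Fin m) :
    IIfun νp νn γ (W - W') t i = IIfun νp νn γ W t i - IIfun νp νn γ W' t i := by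
  unfold IIfun
  rw [← Finset.sum_sub_distrib]
  refine Finset.sum_congr rfl fun j _ => ?_
  have e1 : (∫ s in Set.Iic (0:ℝ), Real.exp (γ * (t + s)) * (W - W') (t + s) j ∂(νp i j))
      = (∫ s in Set.Iic (0:ℝ), Real.exp (γ * (t + s)) * W (t + s) j ∂(νp i j))
        - ∫ s in Set.Iic (0:ℝ), Real.exp (γ * (t + s)) * W' (t + s) j ∂(νp i j) := by
    rw [← integral_sub (II_integrand_int hγ W t j _ (hp i j)) (II_integrand_int hγ W' t j _ (hp i j))]
    refine setIntegral_congr_fun measurableSet_Iic fun s _ => ?_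
    simp only [BoundedContinuousFunction.coe_sub, Pi.sub_apply]
    ring
  have e2 : (∫ s in Set.Iic (0:ℝ), Real.exp (γ * (t + s)) * (W - W') (t + s) j ∂(νn i j))
      = (∫ s in Set.Iic (0:ℝ), Real.exp (γ * (t + s)) * W (t + s) j ∂(νn i j))
        - ∫ s in Set.Iic (0:ℝ), Real.exp (γ * (t + s)) * W' (t + s) j ∂(νn i j) := by
    rw [← integral_sub (II_integrand_int hγ W t j _ (hn i j)) (II_integrand_int hγ W' t j _ (hn i j))]
    refine setIntegral_congr_fun measurableSet_Iic fun s _ => ?_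
    simp only [BoundedContinuousFunction.coe_sub, Pi.sub_apply]
    ring
  rw [e1, e2]; ring

include hp hn hγ in
lemma II_continuous (W : BCFm m) (i : Fin m) : Continuous fun t => IIfun νp νn γ W t i := by
  unfold IIfun
  refine continuous_finset_sum _ fun j _ => Continuous.sub ?_ ?_
  · exact continuous_setIntegral_shift (νp i j) (hp i j)
      (fun u => Real.exp (γ * u) * W u j)
      (Continuous.mul (Real.continuous_exp.comp (continuous_const.mul continuous_id))
        ((continuous_apply j).comp W.continuous))
      (fun B => ⟨Real.exp (γ * B) * ‖W‖, fun s hs => by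
        have h1 : |W s j| ≤ ‖W‖ :=
          le_trans (by simpa [Real.norm_eq_abs] using norm_le_pi_norm (W s) j) (W.norm_coe_le_norm _)
        have h2 : Real.exp (γ * s) ≤ Real.exp (γ * B) := by
          apply Real.exp_le_exp.2; nlinarith
        rw [abs_mul, abs_of_nonneg (Real.exp_pos _).le]
        nlinarith [abs_nonneg (W s j), Real.exp_pos (γ * s)]⟩)
  · exact continuous_setIntegral_shift (νn i j) (hn i j)
      (fun u => Real.exp (γ * u) * W u j)
      (Continuous.mul (Real.continuous_exp.comp (continuous_const.mul continuous_id))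
        ((continuous_apply j).comp W.continuous))
      (fun B => ⟨Real.exp (γ * B) * ‖W‖, fun s hs => by
        have h1 : |W s j| ≤ ‖W‖ :=
          le_trans (by simpa [Real.norm_eq_abs] using norm_le_pi_norm (W s) j) (W.norm_coe_le_norm _)
        have h2 : Real.exp (γ * s) ≤ Real.exp (γ * B) := by
          apply Real.exp_le_exp.2; nlinarith
        rw [abs_mul, abs_of_nonneg (Real.exp_pos _).le]
        nlinarith [abs_nonneg (W s j), Real.exp_pos (γ * s)]⟩)

include hp hn hγ in
lemma II_zero_of_zero_past (W : BCFm m) (hW : ∀ t ≤ (0:ℝ), W t = 0) (i : Fin m) :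
    IIfun νp νn γ W 0 i = 0 := by
  unfold IIfun
  refine Finset.sum_eq_zero fun j _ => ?_
  have hz : ∀ μ : Measure ℝ, (∫ s in Set.Iic (0:ℝ), Real.exp (γ * ((0:ℝ) + s)) * W ((0:ℝ) + s) j ∂μ) = 0 := by
    intro μ
    rw [show (∫ s in Set.Iic (0:ℝ), Real.exp (γ * ((0:ℝ) + s)) * W ((0:ℝ) + s) j ∂μ)
        = ∫ s in Set.Iic (0:ℝ), (0:ℝ) ∂μ from
      setIntegral_congr_fun measurableSet_Iic fun s hs => by
        have hs' : (0:ℝ) + s ≤ 0 := by simpa using hs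
        rw [hW _ hs']; simp]
    simp
  rw [hz, hz]; ring

end estimates

end St4

namespace St4

variable {m : ℕ} {νp νn : Fin m → Fin m → Measure ℝ} {γ : ℝ}
variable (hp : ∀ i j, νp i j Set.univ ≠ ⊤) (hn : ∀ i j, νn i j Set.univ ≠ ⊤) (hγ : 0 ≤ γ)
variable (hρ : (∑ i : Fin m, ∑ j : Fin m,
      ((∫ s in Set.Iic (0:ℝ), Real.exp (γ * s) ∂(νp i j))
        + ∫ s in Set.Iic (0:ℝ), Real.exp (γ * s) ∂(νn i j))) ≤ 1/4)

include hp hn hγ hρ in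
lemma exists_solution (f : ℝ → Fin m → ℝ) (hfc : Continuous f) (hf0 : ∀ t ≤ (0:ℝ), f t = 0)
    (F : ℝ) (hF : ∀ t, ‖f t‖ ≤ F) :
    ∃ z : ℝ → Fin m → ℝ, Continuous z ∧ (∀ t ≤ (0:ℝ), z t = 0) ∧
      (∀ t, 0 ≤ t → Dop m νp νn (shift m z t) = f t) ∧
      (∀ t, ‖z t‖ ≤ 2 * Real.exp (γ * max t 0) * F) := by
  classical
  have hF0 : 0 ≤ F := le_trans (norm_nonneg _) (hF 0)
  -- continuity of the operator output
  have hEEcont : ∀ W : BCFm m, Continuous (EEfun νp νn γ f W) := by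
    intro W
    unfold EEfun
    refine Continuous.if_le continuous_const ?_ continuous_id continuous_const ?_
    · refine continuous_pi fun i => Continuous.mul
        (Real.continuous_exp.comp (continuous_const.mul continuous_id).neg) ?_
      exact (II_continuous hp hn hγ (flat W) i).add ((continuous_apply i).comp hfc)
    · intro t ht
      have ht0 : t = 0 := ht
      subst ht0
      funext i
      have hIIz := II_zero_of_zero_past hp hn hγ (flat W) (fun u hu => flat_zero_past W hu) i
      have hfz : f 0 i = 0 := by rw [hf0 0 le_rfl]; rfl
      simp [hIIz, hfz]
  have hEEzero : ∀ W : BCFm m, ∀ t ≤ (0:ℝ), EEfun νp νn γ f W t = 0 := by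
    intro W t ht; simp [EEfun, ht]
  have hexpinv : ∀ t : ℝ, Real.exp (-(γ * t)) * Real.exp (γ * t) = 1 := by
    intro t; rw [← Real.exp_add]; simp
  have hEEbound : ∀ W : BCFm m, ∀ t, ‖EEfun νp νn γ f W t‖ ≤ (1/2) * ‖W‖ + F := by
    intro W t
    by_cases ht : t ≤ 0
    · rw [hEEzero W t ht, norm_zero]; positivity
    · push_neg at ht
      rw [EEfun, if_neg (not_le.2 ht), pi_norm_le_iff_of_nonneg (by positivity)]
      intro i
      have hII := II_abs_le hp hn hγ hρ (flat W) (M := 2 * ‖W‖) (by positivity)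
        (flat_norm_le W) t i
      have hfb : |f t i| ≤ F :=
        le_trans (by simpa [Real.norm_eq_abs] using norm_le_pi_norm (f t) i) (hF t)
      have hexp1 : Real.exp (-(γ * t)) ≤ 1 := Real.exp_le_one_iff.2 (by nlinarith)
      rw [Real.norm_eq_abs, abs_mul, abs_of_nonneg (Real.exp_pos _).le]
      have h3 : |IIfun νp νn γ (flat W) t i + f t i|
          ≤ Real.exp (γ * t) * (2 * ‖W‖) * (1/4) + F :=
        (abs_add_le _ _).trans (add_le_add hII hfb)
      calc Real.exp (-(γ * t)) * |IIfun νp νn γ (flat W) t i + f t i|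
          ≤ Real.exp (-(γ * t)) * (Real.exp (γ * t) * (2 * ‖W‖) * (1/4) + F) :=
            mul_le_mul_of_nonneg_left h3 (Real.exp_pos _).le
        _ = (Real.exp (-(γ * t)) * Real.exp (γ * t)) * (‖W‖ * (1/2)) + Real.exp (-(γ * t)) * F := by
            ring
        _ ≤ (1/2) * ‖W‖ + F := by
            rw [hexpinv t]
            have := norm_nonneg W
            nlinarith
  -- the contraction
  let Φ : BCFm m → BCFm m := fun W => BoundedContinuousFunction.ofNormedAddCommGroup
    (EEfun νp νn γ f W) (hEEcont W) ((1/2) * ‖W‖ + F) (hEEbound W)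
  have hΦapp : ∀ (W : BCFm m) (t : ℝ), Φ W t = EEfun νp νn γ f W t := fun W t => rfl
  have hdist : ∀ W W' : BCFm m, dist (Φ W) (Φ W') ≤ (1/2) * dist W W' := by
    intro W W'
    rw [BoundedContinuousFunction.dist_le (by positivity)]
    intro t
    rw [dist_eq_norm, hΦapp, hΦapp, pi_norm_le_iff_of_nonneg (by positivity)]
    intro i
    by_cases ht : t ≤ 0
    · rw [hEEzero W t ht, hEEzero W' t ht]
      simp only [sub_self, Pi.zero_apply, norm_zero]
      positivity
    · push_neg at ht
      have hval : (EEfun νp νn γ f W t - EEfun νp νn γ f W' t) i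
          = Real.exp (-(γ * t)) * IIfun νp νn γ (flat (W - W')) t i := by
        rw [flat_sub, II_sub hp hn hγ]
        simp only [EEfun, if_neg (not_le.2 ht), Pi.sub_apply]
        ring
      rw [Real.norm_eq_abs, hval, abs_mul, abs_of_nonneg (Real.exp_pos _).le]
      have hM : ∀ u, ‖flat (W - W') u‖ ≤ 2 * dist W W' := by
        intro u
        have := flat_norm_le (W - W') u
        rwa [← dist_eq_norm] at this
      have hII := II_abs_le hp hn hγ hρ (flat (W - W')) (M := 2 * dist W W')
        (by positivity) hM t i
      calc Real.exp (-(γ * t)) * |IIfun νp νn γ (flat (W - W')) t i|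
          ≤ Real.exp (-(γ * t)) * (Real.exp (γ * t) * (2 * dist W W') * (1/4)) :=
            mul_le_mul_of_nonneg_left hII (Real.exp_pos _).le
        _ = (Real.exp (-(γ * t)) * Real.exp (γ * t)) * ((1/2) * dist W W') := by ring
        _ = (1/2) * dist W W' := by rw [hexpinv t]; ring
  have hcontr : ContractingWith (1/2 : NNReal) Φ := by
    constructor
    · rw [← NNReal.coe_lt_coe]; norm_num
    · refine LipschitzWith.of_dist_le_mul fun W W' => ?_
      have h := hdist W W'
      have hc : ((1/2 : NNReal) : ℝ) = 1/2 := by norm_num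
      rw [hc]; exact h
  let Z : BCFm m := hcontr.fixedPoint Φ
  have hfix : Φ Z = Z := hcontr.fixedPoint_isFixedPt
  have hZpt : ∀ t, Z t = EEfun νp νn γ f Z t := by
    intro t
    conv_lhs => rw [← hfix]
    exact hΦapp Z t
  have hZ0 : ∀ t ≤ (0:ℝ), Z t = 0 := fun t ht => by rw [hZpt t]; exact hEEzero Z t ht
  have hflatZ : flat Z = Z := BoundedContinuousFunction.ext fun u => flat_eq hZ0 u
  have hZnorm : ‖Z‖ ≤ 2 * F := by
    have h1 : ‖Z‖ ≤ (1/2) * ‖Z‖ + F := by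
      rw [BoundedContinuousFunction.norm_le (by positivity)]
      intro t
      rw [hZpt t]
      exact hEEbound Z t
    linarith
  refine ⟨fun t i => Real.exp (γ * t) * Z t i, ?_, ?_, ?_, ?_⟩
  · exact continuous_pi fun i => Continuous.mul
      (Real.continuous_exp.comp (continuous_const.mul continuous_id))
      ((continuous_apply i).comp Z.continuous)
  · intro t ht; funext i; simp [hZ0 t ht]
  · intro t ht
    funext i
    rw [dop_shift_apply]
    have hIIeq : (∑ j : Fin m,
        ((∫ s in Set.Iic (0:ℝ), (fun t i => Real.exp (γ * t) * Z t i) (t + s) j ∂(νp i j))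
          - ∫ s in Set.Iic (0:ℝ), (fun t i => Real.exp (γ * t) * Z t i) (t + s) j ∂(νn i j)))
        = IIfun νp νn γ Z t i := rfl
    rw [hIIeq]
    rcases eq_or_lt_of_le ht with h0 | h0
    · have ht0 : t = 0 := h0.symm
      subst ht0
      have hz0 : (fun t i => Real.exp (γ * t) * Z t i) 0 i = 0 := by simp [hZ0 0 le_rfl]
      have hII0 := II_zero_of_zero_past hp hn hγ Z hZ0 i
      have hfz : f 0 i = 0 := by rw [hf0 0 le_rfl]; rfl
      simp only [hz0, hII0, hfz, sub_zero]
    · have hne : ¬ t ≤ 0 := not_le.2 h0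
      have he := congrFun (hZpt t) i
      rw [EEfun, if_neg hne] at he
      rw [hflatZ] at he
      show Real.exp (γ * t) * Z t i - IIfun νp νn γ Z t i = f t i
      rw [he, ← mul_assoc, mul_comm (Real.exp (γ * t)) (Real.exp (-(γ * t))), hexpinv t, one_mul]
      ring
  · intro t
    rw [pi_norm_le_iff_of_nonneg (by positivity)]
    intro i
    have h1 : |Z t i| ≤ 2 * F :=
      le_trans (by simpa [Real.norm_eq_abs] using norm_le_pi_norm (Z t) i)
        ((Z.norm_coe_le_norm t).trans hZnorm)
    have h2 : Real.exp (γ * t) ≤ Real.exp (γ * max t 0) := by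
      apply Real.exp_le_exp.2
      exact mul_le_mul_of_nonneg_left (le_max_left t 0) hγ
    rw [Real.norm_eq_abs, abs_mul, abs_of_nonneg (Real.exp_pos _).le]
    have e1 := (Real.exp_pos (γ * t)).le
    have e2 := (Real.exp_pos (γ * max t 0)).le
    nlinarith [abs_nonneg (Z t i)]

end St4

namespace St4

variable {m : ℕ} {νp νn : Fin m → Fin m → Measure ℝ} {γ : ℝ}
variable (hp : ∀ i j, νp i j Set.univ ≠ ⊤) (hn : ∀ i j, νn i j Set.univ ≠ ⊤) (hγ : 0 ≤ γ)
variable (hρ : (∑ i : Fin m, ∑ j : Fin m,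
      ((∫ s in Set.Iic (0:ℝ), Real.exp (γ * s) ∂(νp i j))
        + ∫ s in Set.Iic (0:ℝ), Real.exp (γ * s) ∂(νn i j))) ≤ 1/4)

include hp hn hγ hρ in
lemma uniqueness (t0 : ℝ) {d : ℝ → Fin m → ℝ} (hdc : Continuous d)
    (hd0 : ∀ s ≤ (0:ℝ), d s = 0)
    (hD : ∀ τ, 0 ≤ τ → τ ≤ t0 → Dop m νp νn (shift m d τ) = 0) :
    ∀ τ, 0 ≤ τ → τ ≤ t0 → d τ = 0 := by
  intro τ hτ0 hτt0
  haveI hne : Nonempty (Set.Icc (0:ℝ) t0) := ⟨⟨τ, hτ0, hτt0⟩⟩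
  set B : ℝ := ⨆ u : Set.Icc (0:ℝ) t0, Real.exp (-(γ * (u:ℝ))) * ‖d (u:ℝ)‖ with hBdef
  have hcont : ContinuousOn (fun u => Real.exp (-(γ * u)) * ‖d u‖) (Set.Icc (0:ℝ) t0) :=
    (Continuous.mul (Real.continuous_exp.comp (continuous_const.mul continuous_id).neg)
      hdc.norm).continuousOn
  obtain ⟨Cb, hCb⟩ := isCompact_Icc.exists_bound_of_continuousOn hcont
  have hbdd : BddAbove (Set.range fun u : Set.Icc (0:ℝ) t0 =>
      Real.exp (-(γ * (u:ℝ))) * ‖d (u:ℝ)‖) := by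
    refine ⟨Cb, ?_⟩
    rintro y ⟨⟨u, hu⟩, rfl⟩
    have h := hCb u hu
    rw [Real.norm_eq_abs] at h
    exact (le_abs_self _).trans h
  have hBle : ∀ u, u ∈ Set.Icc (0:ℝ) t0 → Real.exp (-(γ * u)) * ‖d u‖ ≤ B :=
    fun u hu => le_ciSup hbdd ⟨u, hu⟩
  have hB0 : 0 ≤ B := Real.iSup_nonneg fun u => by positivity
  have hexpinv : ∀ t : ℝ, Real.exp (-(γ * t)) * Real.exp (γ * t) = 1 := by
    intro t; rw [← Real.exp_add]; simp
  have key : ∀ u, u ∈ Set.Icc (0:ℝ) t0 → Real.exp (-(γ * u)) * ‖d u‖ ≤ (1/4) * B := by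
    intro u hu
    have hnorm : ‖d u‖ ≤ Real.exp (γ * u) * B * (1/4) := by
      rw [pi_norm_le_iff_of_nonneg (by positivity)]
      intro i
      have hEq : d u i = ∑ j : Fin m,
          ((∫ s in Set.Iic (0:ℝ), d (u + s) j ∂(νp i j))
            - ∫ s in Set.Iic (0:ℝ), d (u + s) j ∂(νn i j)) := by
        have h1 := congrFun (hD u hu.1 hu.2) i
        rw [dop_shift_apply] at h1
        have h2 : (0 : Fin m → ℝ) i = 0 := rfl
        rw [h2] at h1
        linarith [h1]
      have hbound : ∀ s ≤ (0:ℝ), ∀ j : Fin m,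
          |d (u + s) j| ≤ (Real.exp (γ * u) * B) * Real.exp (γ * s) := by
        intro s hs j
        by_cases hus : u + s ≤ 0
        · rw [hd0 _ hus]; simp only [Pi.zero_apply, abs_zero]; positivity
        · push_neg at hus
          have hmem : u + s ∈ Set.Icc (0:ℝ) t0 := ⟨hus.le, by linarith [hu.2]⟩
          have h3 := hBle _ hmem
          have h4 : ‖d (u + s)‖ ≤ Real.exp (γ * (u + s)) * B := by
            have h5 : Real.exp (γ * (u+s)) * (Real.exp (-(γ * (u+s))) * ‖d (u+s)‖)
                ≤ Real.exp (γ * (u+s)) * B :=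
              mul_le_mul_of_nonneg_left h3 (Real.exp_pos _).le
            rwa [← mul_assoc, mul_comm (Real.exp (γ * (u+s))) (Real.exp (-(γ * (u+s)))),
              hexpinv, one_mul] at h5
          have h6 : Real.exp (γ * (u + s)) = Real.exp (γ * u) * Real.exp (γ * s) := by
            rw [← Real.exp_add]; ring_nf
          calc |d (u + s) j| ≤ ‖d (u + s)‖ := by
                simpa [Real.norm_eq_abs] using norm_le_pi_norm (d (u+s)) j
            _ ≤ Real.exp (γ * (u + s)) * B := h4
            _ = (Real.exp (γ * u) * B) * Real.exp (γ * s) := by rw [h6]; ring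
      have hint : ∀ j : Fin m, ∀ μ : Measure ℝ, μ Set.univ ≠ ⊤ →
          |∫ s in Set.Iic (0:ℝ), d (u + s) j ∂μ|
            ≤ (Real.exp (γ * u) * B) * ∫ s in Set.Iic (0:ℝ), Real.exp (γ * s) ∂μ := by
        intro j μ hμ
        haveI : IsFiniteMeasure μ := ⟨lt_top_iff_ne_top.2 hμ⟩
        exact abs_setIntegral_le μ (fun s => d (u + s) j)
          ((continuous_apply j).comp (hdc.comp (continuous_const.add continuous_id)))
          γ (Real.exp (γ * u) * B) hγ (by positivity) (fun s hs => hbound s hs j)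
      rw [Real.norm_eq_abs, hEq]
      calc |∑ j : Fin m, ((∫ s in Set.Iic (0:ℝ), d (u + s) j ∂(νp i j))
          - ∫ s in Set.Iic (0:ℝ), d (u + s) j ∂(νn i j))|
          ≤ ∑ j : Fin m, |((∫ s in Set.Iic (0:ℝ), d (u + s) j ∂(νp i j))
            - ∫ s in Set.Iic (0:ℝ), d (u + s) j ∂(νn i j))| := Finset.abs_sum_le_sum_abs _ _
        _ ≤ ∑ j : Fin m, ((Real.exp (γ * u) * B) *
            ((∫ s in Set.Iic (0:ℝ), Real.exp (γ * s) ∂(νp i j))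
              + ∫ s in Set.Iic (0:ℝ), Real.exp (γ * s) ∂(νn i j))) := by
            refine Finset.sum_le_sum fun j _ => ?_
            have h := (abs_sub _ _).trans (add_le_add (hint j _ (hp i j)) (hint j _ (hn i j)))
            calc |_| ≤ _ := h
              _ = (Real.exp (γ * u) * B) *
                ((∫ s in Set.Iic (0:ℝ), Real.exp (γ * s) ∂(νp i j))
                  + ∫ s in Set.Iic (0:ℝ), Real.exp (γ * s) ∂(νn i j)) := by ring
        _ = (Real.exp (γ * u) * B) * (∑ j : Fin m,
            ((∫ s in Set.Iic (0:ℝ), Real.exp (γ * s) ∂(νp i j))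
              + ∫ s in Set.Iic (0:ℝ), Real.exp (γ * s) ∂(νn i j))) := by rw [Finset.mul_sum]
        _ ≤ Real.exp (γ * u) * B * (1/4) :=
            mul_le_mul_of_nonneg_left (row_le hρ i) (by positivity)
    calc Real.exp (-(γ * u)) * ‖d u‖ ≤ Real.exp (-(γ * u)) * (Real.exp (γ * u) * B * (1/4)) :=
        mul_le_mul_of_nonneg_left hnorm (Real.exp_pos _).le
      _ = (Real.exp (-(γ * u)) * Real.exp (γ * u)) * (B * (1/4)) := by ring
      _ = (1/4) * B := by rw [hexpinv]; ring
  have hBB : B ≤ (1/4) * B := ciSup_le fun u => key u u.2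
  have hB : B = 0 := by linarith
  have hfin : Real.exp (-(γ * τ)) * ‖d τ‖ ≤ 0 := by
    rw [← hB]; exact hBle τ ⟨hτ0, hτt0⟩
  have : ‖d τ‖ ≤ 0 := by
    by_contra hcon
    push_neg at hcon
    nlinarith [Real.exp_pos (-(γ * τ))]
  exact norm_le_zero_iff.1 this

end St4

namespace St4

variable {m : ℕ} {νp νn : Fin m → Fin m → Measure ℝ} {γ : ℝ}
variable (hp : ∀ i j, νp i j Set.univ ≠ ⊤) (hn : ∀ i j, νn i j Set.univ ≠ ⊤) (hγ : 0 ≤ γ)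
variable (hρ : (∑ i : Fin m, ∑ j : Fin m,
      ((∫ s in Set.Iic (0:ℝ), Real.exp (γ * s) ∂(νp i j))
        + ∫ s in Set.Iic (0:ℝ), Real.exp (γ * s) ∂(νn i j))) ≤ 1/4)

include hp hn hγ hρ in
lemma zero_history_bound
    (c : ℝ → ℝ) (hcT : True)
    (hstab : ∀ x : ℝ → Fin m → ℝ, Continuous x → IsBU m x →
      (∀ t : ℝ, 0 ≤ t → Dop m νp νn (shift m x t) = 0) →
      ∀ t : ℝ, 0 ≤ t → ‖x t‖ ≤ c t * supNorm m x)
    (T : ℝ) (hT1 : 1 ≤ T) (hc2T : c (2*T) ≤ 1/2)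
    (κ : ℝ) (hκ : 0 ≤ κ) (Linv : (Fin m → ℝ) → Fin m → ℝ)
    (hLinv : ∀ v, Lam νp νn (Linv v) = v) (hLb : ∀ v, ‖Linv v‖ ≤ κ * ‖v‖)
    (F : ℝ) (hF0 : 0 ≤ F) (f : ℝ → Fin m → ℝ) (hfc : Continuous f)
    (hf0 : ∀ t ≤ (0:ℝ), f t = 0) (hfF : ∀ t, ‖f t‖ ≤ F)
    (z : ℝ → Fin m → ℝ) (hzc : Continuous z) (hz0 : ∀ t ≤ (0:ℝ), z t = 0)
    (hzD : ∀ t, 0 ≤ t → Dop m νp νn (shift m z t) = f t)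
    (hzg : ∀ t, ‖z t‖ ≤ 2 * Real.exp (γ * max t 0) * F) :
    ∀ t : ℝ, ‖z t‖ ≤ (3*κ + 8*Real.exp (γ*(2*T)) + 2) * F := by
  have hT0 : 0 < T := lt_of_lt_of_le one_pos hT1
  set E := Real.exp (γ*(2*T)) with hE
  have hE1 : 1 ≤ E := Real.one_le_exp (by positivity)
  set K := 3*κ + 8*E + 2 with hK
  have hK0 : 0 ≤ K := by nlinarith
  have hKF0 : 0 ≤ K * F := mul_nonneg hK0 hF0
  have main : ∀ n : ℕ, ∀ t : ℝ, t ≤ ((n:ℝ)+2)*T → ‖z t‖ ≤ K*F := by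
    intro n
    induction n with
    | zero =>
      intro t ht
      rcases le_or_gt t 0 with h | h
      · rw [hz0 t h, norm_zero]; exact hKF0
      · have hg := hzg t
        rw [max_eq_left h.le] at hg
        have ht' : t ≤ 2*T := by push_cast at ht; linarith
        have h2 : Real.exp (γ*t) ≤ E := by
          rw [hE]; exact Real.exp_le_exp.2 (mul_le_mul_of_nonneg_left ht' hγ)
        have e0 := (Real.exp_pos (γ*t)).le
        calc ‖z t‖ ≤ 2*Real.exp (γ*t)*F := hg
          _ ≤ 2*E*F := by nlinarith
          _ ≤ K*F := by nlinarith
    | succ n ih =>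
      intro t ht
      by_cases hle : t ≤ ((n:ℝ)+2)*T
      · exact ih t hle
      · push_neg at hle
        have hn0 : (0:ℝ) ≤ (n:ℝ) := Nat.cast_nonneg n
        have ht2 : 2*T < t := by nlinarith
        set b := t - 2*T with hb
        have hb0 : 0 ≤ b := by rw [hb]; linarith
        have hble : b ≤ ((n:ℝ)+2)*T := by
          rw [hb]; push_cast at ht; nlinarith
        set ub := Linv (f b) with hub
        have hubn : ‖ub‖ ≤ κ * F :=
          le_trans (hLb (f b)) (mul_le_mul_of_nonneg_left (hfF b) hκ)
        set fb : ℝ → Fin m → ℝ := fun τ => f (b + max τ 0) - f b with hfb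
        have hfbc : Continuous fb :=
          (hfc.comp (continuous_const.add (continuous_id.max continuous_const))).sub
            continuous_const
        have hfb0 : ∀ τ ≤ (0:ℝ), fb τ = 0 := by
          intro τ hτ
          rw [hfb]
          simp [max_eq_right hτ]
        have hfbF : ∀ τ, ‖fb τ‖ ≤ 2*F := by
          intro τ
          rw [hfb]
          calc ‖f (b + max τ 0) - f b‖ ≤ ‖f (b + max τ 0)‖ + ‖f b‖ := norm_sub_le _ _
            _ ≤ 2*F := by linarith [hfF (b + max τ 0), hfF b]
        obtain ⟨w, hwc, hw0, hwD, hwg⟩ := exists_solution hp hn hγ hρ fb hfbc hfb0 (2*F) hfbF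
        set y : ℝ → Fin m → ℝ := fun τ => z (b + τ) - ub - w τ with hy
        have hyc : Continuous y :=
          ((hzc.comp (continuous_const.add continuous_id)).sub continuous_const).sub hwc
        have hy_past : ∀ s ≤ (0:ℝ), y s = z (b + s) - ub := by
          intro s hs
          show z (b + s) - ub - w s = z (b + s) - ub
          rw [hw0 s hs, sub_zero]
        have hz_past : ∀ u, u ≤ b → ‖z u‖ ≤ K*F := by
          intro u hu
          rcases le_or_gt u 0 with h | h
          · rw [hz0 u h, norm_zero]; exact hKF0
          · exact ih u (le_trans hu hble)
        have hy_past_norm : ∀ s ≤ (0:ℝ), ‖y s‖ ≤ K*F + κ*F := by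
          intro s hs
          rw [hy_past s hs]
          calc ‖z (b+s) - ub‖ ≤ ‖z (b+s)‖ + ‖ub‖ := norm_sub_le _ _
            _ ≤ K*F + κ*F := add_le_add (hz_past _ (by linarith)) hubn
        have hyBU : IsBU m y := by
          constructor
          · exact ⟨K*F + κ*F, hy_past_norm⟩
          · intro ε hε
            obtain ⟨δ, hδ, hd⟩ := uc_helper hzc hz0 b hε
            refine ⟨δ, hδ, fun s hs s' hs' hlt => ?_⟩
            have heq : y s - y s' = z (b+s) - z (b+s') := by
              rw [hy_past s hs, hy_past s' hs']; abel
            rw [heq]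
            exact hd (b+s) (by linarith) (b+s') (by linarith)
              (by rw [show b+s-(b+s') = s - s' by ring]; exact hlt)
        have hyD : ∀ τ, 0 ≤ τ → Dop m νp νn (shift m y τ) = 0 := by
          intro τ hτ
          funext i
          have nz : Nice m (fun u => z (b + u)) :=
            nice_shift (nice_of hzc ⟨0, fun s hs => by rw [hz0 s hs, norm_zero]⟩) b
          have nzu : Nice m (fun u => z (b + u) - ub) := nice_sub nz (nice_const ub)
          have nw : Nice m w := nice_of hwc ⟨0, fun s hs => by rw [hw0 s hs, norm_zero]⟩
          have e1 : Dop m νp νn (shift m y τ) i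
              = Dop m νp νn (shift m (fun u => z (b + u) - ub) τ) i
                - Dop m νp νn (shift m w τ) i :=
            dop_shift_sub hp hn nzu nw τ i
          have e2 : Dop m νp νn (shift m (fun u => z (b + u) - ub) τ) i
              = Dop m νp νn (shift m (fun u => z (b + u)) τ) i
                - Dop m νp νn (shift m (fun _ => ub) τ) i :=
            dop_shift_sub hp hn nz (nice_const ub) τ i
          have e3 : shift m (fun u => z (b + u)) τ = shift m z (b + τ) := by
            funext s; simp [shift, add_assoc]
          have e4 := congrFun (hzD (b + τ) (by linarith)) i
          have e5 : Dop m νp νn (shift m (fun _ => ub) τ) i = Lam νp νn ub i :=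
            dop_shift_const ub τ i
          have e6 : Lam νp νn ub i = f b i := by rw [hub, congrFun (hLinv (f b)) i]
          have e7 := congrFun (hwD τ hτ) i
          rw [e1, e2, e3, e4, e5, e6, e7]
          have e8 : fb τ i = f (b + τ) i - f b i := by
            rw [hfb]
            show (f (b + max τ 0) - f b) i = f (b + τ) i - f b i
            rw [max_eq_left hτ]
            rfl
          rw [e8]
          show f (b + τ) i - f b i - (f (b + τ) i - f b i) = (0 : Fin m → ℝ) i
          simp
        have hysup : supNorm m y ≤ K*F + κ*F := supNorm_le hy_past_norm
        have hyst := hstab y hyc hyBU hyD (2*T) (by positivity)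
        have hy2T : ‖y (2*T)‖ ≤ (1/2) * (K*F + κ*F) := by
          have hKκF : (0:ℝ) ≤ K*F + κ*F := by nlinarith
          calc ‖y (2*T)‖ ≤ c (2*T) * supNorm m y := hyst
            _ ≤ (1/2) * (K*F + κ*F) :=
              mul_le_mul hc2T hysup (supNorm_nonneg y) (by norm_num)
        have hw2T : ‖w (2*T)‖ ≤ 4*E*F := by
          have hg := hwg (2*T)
          rw [max_eq_left (by positivity : (0:ℝ) ≤ 2*T)] at hg
          calc ‖w (2*T)‖ ≤ 2*Real.exp (γ*(2*T))*(2*F) := hg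
            _ = 4*E*F := by rw [hE]; ring
        have hzt : z t = y (2*T) + ub + w (2*T) := by
          funext i
          have hbt : b + 2*T = t := by rw [hb]; ring
          show z t i = (z (b + 2*T) - ub - w (2*T)) i + ub i + w (2*T) i
          rw [hbt]
          simp only [Pi.sub_apply]
          ring
        rw [hzt]
        have hco : (1/2)*(K + κ) + κ + 4*E ≤ K := by rw [hK]; linarith
        calc ‖y (2*T) + ub + w (2*T)‖ ≤ ‖y (2*T)‖ + ‖ub‖ + ‖w (2*T)‖ :=
            (norm_add_le _ _).trans (add_le_add_left (norm_add_le _ _) _)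
          _ ≤ (1/2)*(K*F + κ*F) + κ*F + 4*E*F := by linarith
          _ = ((1/2)*(K + κ) + κ + 4*E)*F := by ring
          _ ≤ K*F := mul_le_mul_of_nonneg_right hco hF0
  intro t
  obtain ⟨n, hn2⟩ := exists_nat_ge t
  refine main n t (le_trans hn2 ?_)
  have hn0 : (0:ℝ) ≤ (n:ℝ) := Nat.cast_nonneg n
  nlinarith

end St4

namespace St4

variable {m : ℕ} {νp νn : Fin m → Fin m → Measure ℝ}

lemma lam_inv_exists
    (c : ℝ → ℝ) (hctend : Filter.Tendsto c Filter.atTop (nhds 0))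
    (hstab : ∀ x : ℝ → Fin m → ℝ, Continuous x → IsBU m x →
      (∀ t : ℝ, 0 ≤ t → Dop m νp νn (shift m x t) = 0) →
      ∀ t : ℝ, 0 ≤ t → ‖x t‖ ≤ c t * supNorm m x) :
    ∃ (κ : ℝ) (Linv : (Fin m → ℝ) → Fin m → ℝ), 0 ≤ κ ∧
      (∀ v, Lam νp νn (Linv v) = v) ∧ (∀ v, ‖Linv v‖ ≤ κ * ‖v‖) := by
  classical
  let LamL : (Fin m → ℝ) →ₗ[ℝ] (Fin m → ℝ) :=
    { toFun := Lam νp νn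
      map_add' := by
        intro u v
        funext i
        simp only [Lam, Pi.add_apply]
        rw [show (∑ j : Fin m, (((νp i j (Set.Iic (0:ℝ))).toReal
            - (νn i j (Set.Iic (0:ℝ))).toReal) * (u j + v j)))
          = (∑ j : Fin m, (((νp i j (Set.Iic (0:ℝ))).toReal
            - (νn i j (Set.Iic (0:ℝ))).toReal) * u j))
            + ∑ j : Fin m, (((νp i j (Set.Iic (0:ℝ))).toReal
            - (νn i j (Set.Iic (0:ℝ))).toReal) * v j) from by
          rw [← Finset.sum_add_distrib]
          exact Finset.sum_congr rfl fun j _ => by ring]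
        ring
      map_smul' := by
        intro r u
        funext i
        simp only [Lam, Pi.smul_apply, smul_eq_mul, RingHom.id_apply]
        rw [show (∑ j : Fin m, (((νp i j (Set.Iic (0:ℝ))).toReal
            - (νn i j (Set.Iic (0:ℝ))).toReal) * (r * u j)))
          = r * ∑ j : Fin m, (((νp i j (Set.Iic (0:ℝ))).toReal
            - (νn i j (Set.Iic (0:ℝ))).toReal) * u j) from by
          rw [Finset.mul_sum]
          exact Finset.sum_congr rfl fun j _ => by ring]
        ring }
  have hinj : Function.Injective LamL := by
    rw [injective_iff_map_eq_zero]
    intro u hu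
    have hLu : Lam νp νn u = 0 := hu
    have hhom : ∀ t : ℝ, 0 ≤ t → Dop m νp νn (shift m (fun _ => u) t) = 0 := by
      intro t _
      funext i
      rw [dop_shift_const]
      exact congrFun hLu i
    have hBU : IsBU m (fun _ => u) := by
      refine ⟨⟨‖u‖, fun _ _ => le_rfl⟩, fun ε hε => ⟨1, one_pos, fun s _ s' _ _ => ?_⟩⟩
      simpa using hε
    obtain ⟨t, htc, ht0⟩ :=
      ((hctend.eventually_lt_const one_pos).and (eventually_ge_atTop (0:ℝ))).exists
    have hsn : supNorm m (fun _ : ℝ => u) = ‖u‖ := ciSup_const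
    have hb := hstab _ continuous_const hBU hhom t ht0
    rw [hsn] at hb
    by_contra hne
    have hu0 : 0 < ‖u‖ := norm_pos_iff.2 hne
    nlinarith
  have hsurj : Function.Surjective LamL := LinearMap.injective_iff_surjective.1 hinj
  let e : (Fin m → ℝ) ≃ₗ[ℝ] (Fin m → ℝ) := LinearEquiv.ofBijective LamL ⟨hinj, hsurj⟩
  let CLM := LinearMap.toContinuousLinearMap (e.symm.toLinearMap)
  refine ⟨‖CLM‖, fun v => e.symm v, norm_nonneg _, ?_, ?_⟩
  · intro v
    show LamL (e.symm v) = v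
    exact e.apply_symm_apply v
  · intro v
    have := CLM.le_opNorm v
    exact this

end St4


/-- If `D` is stable, there are a continuous
`c : [0,∞) → [0,∞)` with `c(t) → 0` as `t → ∞` and a constant `k > 0` such
that any solution of `D x_t = h(t)`, `t ≥ 0`, `x_0 = φ`, satisfies
`‖x(t)‖ ≤ c(t) ‖φ‖_∞ + k sup_{0 ≤ u ≤ t} ‖h(u)‖` for each `t ≥ 0`. -/
theorem statement4 (m : ℕ) (νp νn : Fin m → Fin m → Measure ℝ)
    (hν : NuCond m νp νn) (hst : IsStableOp m (Dop m νp νn)) :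
    ∃ c : ℝ → ℝ, ContinuousOn c (Set.Ici 0) ∧ (∀ t : ℝ, 0 ≤ t → 0 ≤ c t) ∧
      Filter.Tendsto c Filter.atTop (nhds 0) ∧
      ∃ k : ℝ, 0 < k ∧
        ∀ h : ℝ → Fin m → ℝ, ContinuousOn h (Set.Ici 0) →
        ∀ φ x : ℝ → Fin m → ℝ, IsBU m φ → Dop m νp νn φ = h 0 →
          Continuous x → (∀ s : ℝ, s ≤ 0 → x s = φ s) →
          (∀ t : ℝ, 0 ≤ t → Dop m νp νn (shift m x t) = h t) →
          ∀ t : ℝ, 0 ≤ t → ‖x t‖ ≤ c t * supNorm m φ + k * supOn m h t := by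
  classical
  open St4 in
  obtain ⟨c, hccont, hcnn, hctend, hstab⟩ := hst
  have hp : ∀ i j, νp i j Set.univ ≠ ⊤ := hν.1
  have hn : ∀ i j, νn i j Set.univ ≠ ⊤ := hν.2.1
  obtain ⟨γ, hγ, hρ⟩ := St4.gamma_exists hν
  -- the time horizon T
  obtain ⟨T₀, hT₀⟩ := Filter.eventually_atTop.1
    (hctend.eventually_le_const (by norm_num : (0:ℝ) < 1/2))
  set T := max T₀ 1 with hTdef
  have hT1 : 1 ≤ T := le_max_right _ _
  have hT0 : 0 < T := lt_of_lt_of_le one_pos hT1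
  have hc2T : c (2*T) ≤ 1/2 := hT₀ _ (by
    have h1 : T₀ ≤ T := le_max_left _ _
    linarith)
  -- uniform bound for c on [0,∞)
  obtain ⟨A₀, hA₀⟩ := isCompact_Icc.exists_bound_of_continuousOn
    (s := Set.Icc (0:ℝ) T) (hccont.mono (fun u hu => hu.1))
  set A := max A₀ 1 with hAdef
  have hA0 : 0 ≤ A := le_trans zero_le_one (le_max_right _ _)
  have hA : ∀ t : ℝ, 0 ≤ t → c t ≤ A := by
    intro t ht
    rcases le_or_gt t T with h | h
    · have := hA₀ t ⟨ht, h⟩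
      rw [Real.norm_eq_abs] at this
      exact le_trans (le_abs_self _) (this.trans (le_max_left _ _))
    · have : T₀ ≤ t := by
        have h1 : T₀ ≤ T := le_max_left _ _
        linarith
      exact le_trans (hT₀ t this) (by
        have : (1:ℝ) ≤ A := le_max_right _ _
        linarith)
  -- the inverse of Λ
  obtain ⟨κ, Linv, hκ, hLinv, hLb⟩ := St4.lam_inv_exists c hctend hstab
  set E := Real.exp (γ*(2*T)) with hEdef
  have hE1 : 1 ≤ E := Real.one_le_exp (by positivity)
  set K := 3*κ + 8*E + 2 with hKdef
  have hK0 : 0 ≤ K := by nlinarith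
  set k := A*κ + κ + 2*K + 1 with hkdef
  have hk : 0 < k := by nlinarith
  refine ⟨c, hccont, hcnn, hctend, k, hk, ?_⟩
  intro h hh φ x hφBU hφD hxc hxφ hxD t0 ht0
  -- bound for h on [0,t0]
  obtain ⟨Ch, hCh⟩ := isCompact_Icc.exists_bound_of_continuousOn
    (s := Set.Icc (0:ℝ) t0) (hh.mono (fun u hu => hu.1))
  set H := supOn m h t0 with hHdef
  have hHb : ∀ u, u ∈ Set.Icc (0:ℝ) t0 → ‖h u‖ ≤ H := fun u hu => St4.le_supOn hCh hu
  have hH0 : 0 ≤ H := St4.supOn_nonneg h t0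
  have hh0H : ‖h 0‖ ≤ H := hHb 0 ⟨le_rfl, ht0⟩
  -- bound for φ
  obtain ⟨Cφ, hCφ⟩ := hφBU.1
  have hCφ0 : 0 ≤ Cφ := le_trans (norm_nonneg _) (hCφ 0 le_rfl)
  set u0 := Linv (h 0) with hu0def
  have hu0 : ‖u0‖ ≤ κ * H :=
    le_trans (hLb (h 0)) (mul_le_mul_of_nonneg_left hh0H hκ)
  have hu0' : 0 ≤ κ * H := mul_nonneg hκ hH0
  -- the BU extension ψ of φ - u0
  set ψ : ℝ → Fin m → ℝ := fun s => x (min s 0) - u0 with hψdef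
  have hψc : Continuous ψ :=
    (hxc.comp (continuous_id.min continuous_const)).sub continuous_const
  have hψpast : ∀ s ≤ (0:ℝ), ψ s = φ s - u0 := by
    intro s hs
    show x (min s 0) - u0 = φ s - u0
    rw [min_eq_left hs, hxφ s hs]
  have hψb : ∀ s, ‖ψ s‖ ≤ Cφ + ‖u0‖ := by
    intro s
    have h1 : ‖x (min s 0)‖ ≤ Cφ := by
      rw [hxφ _ (min_le_right s 0)]
      exact hCφ _ (min_le_right s 0)
    calc ‖x (min s 0) - u0‖ ≤ ‖x (min s 0)‖ + ‖u0‖ := norm_sub_le _ _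
      _ ≤ Cφ + ‖u0‖ := by linarith
  have hψnice : St4.Nice m ψ := ⟨hψc, fun _ => ⟨Cφ + ‖u0‖, fun s _ => hψb s⟩⟩
  -- integrability of x on the past
  have hintx : ∀ (j : Fin m) (μ : Measure ℝ), μ Set.univ ≠ ⊤ →
      IntegrableOn (fun s => x s j) (Set.Iic (0:ℝ)) μ := by
    intro j μ hμ
    haveI : IsFiniteMeasure μ := ⟨lt_top_iff_ne_top.2 hμ⟩
    refine St4.integrableOn_of_bound μ _ ((continuous_apply j).comp hxc) Cφ fun s hs => ?_
    calc |x s j| ≤ ‖x s‖ := by simpa [Real.norm_eq_abs] using norm_le_pi_norm (x s) j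
      _ ≤ Cφ := by rw [hxφ s hs]; exact hCφ s hs
  -- D ψ = 0
  have hψD : Dop m νp νn ψ = 0 := by
    funext i
    have key : ∀ (j : Fin m) (μ : Measure ℝ), μ Set.univ ≠ ⊤ →
        (∫ s in Set.Iic (0:ℝ), ψ s j ∂μ)
          = (∫ s in Set.Iic (0:ℝ), φ s j ∂μ) - (μ (Set.Iic (0:ℝ))).toReal * u0 j := by
      intro j μ hμ
      haveI : IsFiniteMeasure μ := ⟨lt_top_iff_ne_top.2 hμ⟩
      have e1 : (∫ s in Set.Iic (0:ℝ), ψ s j ∂μ)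
          = ∫ s in Set.Iic (0:ℝ), (x s j - u0 j) ∂μ := by
        refine setIntegral_congr_fun measurableSet_Iic fun s hs => ?_
        show ψ s j = x s j - u0 j
        have hs' : s ≤ (0:ℝ) := hs
        show x (min s 0) j - u0 j = x s j - u0 j
        rw [min_eq_left hs']
      have e2 : (∫ s in Set.Iic (0:ℝ), (x s j - u0 j) ∂μ)
          = (∫ s in Set.Iic (0:ℝ), x s j ∂μ) - (μ (Set.Iic (0:ℝ))).toReal * u0 j := by
        rw [integral_sub (hintx j μ hμ) (integrableOn_const (measure_lt_top μ _).ne)]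
        rw [setIntegral_const, smul_eq_mul, measureReal_def]
      have e3 : (∫ s in Set.Iic (0:ℝ), x s j ∂μ) = ∫ s in Set.Iic (0:ℝ), φ s j ∂μ := by
        refine setIntegral_congr_fun measurableSet_Iic fun s hs => ?_
        have hs' : s ≤ (0:ℝ) := hs
        rw [hxφ s hs']
      rw [e1, e2, e3]
    have hmain : Dop m νp νn ψ i = Dop m νp νn φ i - St4.Lam νp νn u0 i := by
      show ψ 0 i - (∑ j : Fin m, ((∫ s in Set.Iic (0:ℝ), ψ s j ∂(νp i j))
          - ∫ s in Set.Iic (0:ℝ), ψ s j ∂(νn i j)))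
        = Dop m νp νn φ i - St4.Lam νp νn u0 i
      have hsum : ∀ j ∈ Finset.univ (α := Fin m),
          ((∫ s in Set.Iic (0:ℝ), ψ s j ∂(νp i j)) - ∫ s in Set.Iic (0:ℝ), ψ s j ∂(νn i j))
          = (((∫ s in Set.Iic (0:ℝ), φ s j ∂(νp i j)) - ∫ s in Set.Iic (0:ℝ), φ s j ∂(νn i j))
            - (((νp i j (Set.Iic (0:ℝ))).toReal - (νn i j (Set.Iic (0:ℝ))).toReal) * u0 j)) := by
        intro j _
        rw [key j _ (hp i j), key j _ (hn i j)]; ring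
      rw [Finset.sum_congr rfl hsum, Finset.sum_sub_distrib]
      have hψ0 : ψ 0 i = φ 0 i - u0 i := by
        show x (min 0 0) i - u0 i = φ 0 i - u0 i
        rw [min_self, hxφ 0 le_rfl]
      rw [hψ0]
      show φ 0 i - u0 i - _ = (φ 0 i - ∑ j : Fin m, ((∫ s in Set.Iic (0:ℝ), φ s j ∂(νp i j))
          - ∫ s in Set.Iic (0:ℝ), φ s j ∂(νn i j)))
        - (u0 i - ∑ j : Fin m, (((νp i j (Set.Iic (0:ℝ))).toReal
          - (νn i j (Set.Iic (0:ℝ))).toReal) * u0 j))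
      ring
    show Dop m νp νn ψ i = (0 : Fin m → ℝ) i
    rw [hmain, congrFun hφD i, congrFun (hLinv (h 0)) i]
    show h 0 i - h 0 i = 0
    ring
  -- forcing for the w₁ correction
  set f1 : ℝ → Fin m → ℝ := fun τ => -(Dop m νp νn (shift m ψ (max τ 0))) with hf1def
  have hf1c : Continuous f1 := by
    refine continuous_pi fun i => ?_
    have h1 : Continuous fun τ : ℝ => Dop m νp νn (shift m ψ (max τ 0)) i :=
      (St4.continuous_dop_shift hp hn hψnice i).comp (continuous_id.max continuous_const)
    exact h1.neg
  have hshiftψ0 : shift m ψ 0 = ψ := by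
    funext s; show ψ (0 + s) = ψ s; rw [zero_add]
  have hf10 : ∀ τ ≤ (0:ℝ), f1 τ = 0 := by
    intro τ hτ
    show -(Dop m νp νn (shift m ψ (max τ 0))) = 0
    rw [max_eq_right hτ, hshiftψ0, hψD, neg_zero]
  set F1 := (Cφ + ‖u0‖) * (1 + St4.Vtot νp νn) with hF1def
  have hF1 : ∀ τ, ‖f1 τ‖ ≤ F1 := by
    intro τ
    have hV := St4.Vtot_nonneg (νp := νp) (νn := νn)
    rw [pi_norm_le_iff_of_nonneg (by positivity)]
    intro i
    show ‖(-(Dop m νp νn (shift m ψ (max τ 0)))) i‖ ≤ F1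
    rw [Pi.neg_apply, Real.norm_eq_abs, abs_neg]
    exact St4.abs_dop_shift_le hp hn hψc (by positivity) hψb (max τ 0) i
  obtain ⟨w1, hw1c, hw10, hw1D, _⟩ := St4.exists_solution hp hn hγ hρ f1 hf1c hf10 F1 hF1
  have hw1nice : St4.Nice m w1 :=
    St4.nice_of hw1c ⟨0, fun s hs => by rw [hw10 s hs, norm_zero]⟩
  -- the homogeneous part y
  set y : ℝ → Fin m → ℝ := fun τ => ψ τ + w1 τ with hydef
  have hyc : Continuous y := hψc.add hw1c
  have hynice : St4.Nice m y := St4.nice_add hψnice hw1nice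
  have hypast : ∀ s ≤ (0:ℝ), y s = φ s - u0 := by
    intro s hs
    show ψ s + w1 s = φ s - u0
    rw [hw10 s hs, add_zero, hψpast s hs]
  have hyD : ∀ τ, 0 ≤ τ → Dop m νp νn (shift m y τ) = 0 := by
    intro τ hτ
    funext i
    have e1 : Dop m νp νn (shift m y τ) i
        = Dop m νp νn (shift m ψ τ) i + Dop m νp νn (shift m w1 τ) i :=
      St4.dop_shift_add hp hn hψnice hw1nice τ i
    have e2 := congrFun (hw1D τ hτ) i
    have e3 : f1 τ i = -(Dop m νp νn (shift m ψ (max τ 0)) i) := rfl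
    rw [e1, e2, e3, max_eq_left hτ]
    simp
  have hyBU : IsBU m y := by
    constructor
    · refine ⟨Cφ + ‖u0‖, fun s hs => ?_⟩
      rw [hypast s hs]
      calc ‖φ s - u0‖ ≤ ‖φ s‖ + ‖u0‖ := norm_sub_le _ _
        _ ≤ Cφ + ‖u0‖ := by linarith [hCφ s hs]
    · intro ε hε
      obtain ⟨δ, hδ, hd⟩ := hφBU.2 ε hε
      refine ⟨δ, hδ, fun s hs s' hs' hlt => ?_⟩
      have heq : y s - y s' = φ s - φ s' := by
        rw [hypast s hs, hypast s' hs']; abel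
      rw [heq]
      exact hd s hs s' hs' hlt
  have hysup : supNorm m y ≤ supNorm m φ + κ * H := by
    refine St4.supNorm_le fun s hs => ?_
    rw [hypast s hs]
    calc ‖φ s - u0‖ ≤ ‖φ s‖ + ‖u0‖ := norm_sub_le _ _
      _ ≤ supNorm m φ + κ * H := add_le_add (St4.le_supNorm hCφ hs) hu0
  -- the zero-history part z with truncated forcing
  set f2 : ℝ → Fin m → ℝ := fun τ => h (min (max τ 0) t0) - h 0 with hf2def
  have hclamp : ∀ τ : ℝ, min (max τ 0) t0 ∈ Set.Icc (0:ℝ) t0 :=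
    fun τ => ⟨le_min (le_max_right τ 0) ht0, min_le_right _ _⟩
  have hf2c : Continuous f2 := by
    refine Continuous.sub ?_ continuous_const
    exact hh.comp_continuous ((continuous_id.max continuous_const).min continuous_const)
      (fun τ => (hclamp τ).1)
  have hf20 : ∀ τ ≤ (0:ℝ), f2 τ = 0 := by
    intro τ hτ
    show h (min (max τ 0) t0) - h 0 = 0
    rw [max_eq_right hτ, min_eq_left ht0, sub_self]
  have hf2F : ∀ τ, ‖f2 τ‖ ≤ 2*H := by
    intro τ
    calc ‖h (min (max τ 0) t0) - h 0‖ ≤ ‖h (min (max τ 0) t0)‖ + ‖h 0‖ := norm_sub_le _ _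
      _ ≤ 2*H := by linarith [hHb _ (hclamp τ), hh0H]
  obtain ⟨z, hzc, hz0, hzD, hzg⟩ := St4.exists_solution hp hn hγ hρ f2 hf2c hf20 (2*H) hf2F
  have hznice : St4.Nice m z := St4.nice_of hzc ⟨0, fun s hs => by rw [hz0 s hs, norm_zero]⟩
  have hzK : ∀ t : ℝ, ‖z t‖ ≤ K * (2*H) := by
    have := St4.zero_history_bound hp hn hγ hρ c trivial hstab T hT1 hc2T κ hκ Linv hLinv hLb
      (2*H) (by positivity) f2 hf2c hf20 hf2F z hzc hz0 hzD hzg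
    intro t
    have h1 := this t
    rw [← hEdef, ← hKdef] at h1
    exact h1
  -- x agrees with y + u0 + z on [0,t0]
  have hxnice : St4.Nice m x := St4.nice_of hxc ⟨Cφ, fun s hs => by
    rw [hxφ s hs]; exact hCφ s hs⟩
  have hd0 : ∀ s ≤ (0:ℝ), (fun u => x u - (y u + u0 + z u)) s = 0 := by
    intro s hs
    show x s - (y s + u0 + z s) = 0
    rw [hypast s hs, hz0 s hs, hxφ s hs]
    abel
  have hdD : ∀ τ, 0 ≤ τ → τ ≤ t0 →
      Dop m νp νn (shift m (fun u => x u - (y u + u0 + z u)) τ) = 0 := by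
    intro τ hτ0 hτt0
    funext i
    have nyu : St4.Nice m (fun u => y u + u0) := St4.nice_add hynice (St4.nice_const u0)
    have nyuz : St4.Nice m (fun u => y u + u0 + z u) := St4.nice_add nyu hznice
    have e1 : Dop m νp νn (shift m (fun u => x u - (y u + u0 + z u)) τ) i
        = Dop m νp νn (shift m x τ) i - Dop m νp νn (shift m (fun u => y u + u0 + z u) τ) i :=
      St4.dop_shift_sub hp hn hxnice nyuz τ i
    have e2 : Dop m νp νn (shift m (fun u => y u + u0 + z u) τ) i
        = Dop m νp νn (shift m (fun u => y u + u0) τ) i + Dop m νp νn (shift m z τ) i :=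
      St4.dop_shift_add hp hn nyu hznice τ i
    have e3 : Dop m νp νn (shift m (fun u => y u + u0) τ) i
        = Dop m νp νn (shift m y τ) i + Dop m νp νn (shift m (fun _ => u0) τ) i :=
      St4.dop_shift_add hp hn hynice (St4.nice_const u0) τ i
    have e4 := congrFun (hyD τ hτ0) i
    have e5 : Dop m νp νn (shift m (fun _ => u0) τ) i = St4.Lam νp νn u0 i :=
      St4.dop_shift_const u0 τ i
    have e6 : St4.Lam νp νn u0 i = h 0 i := congrFun (hLinv (h 0)) i
    have e7 := congrFun (hzD τ hτ0) i
    have e8 : f2 τ i = h τ i - h 0 i := by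
      show (h (min (max τ 0) t0) - h 0) i = h τ i - h 0 i
      rw [max_eq_left hτ0, min_eq_left hτt0]
      rfl
    have e9 := congrFun (hxD τ hτ0) i
    rw [e1, e2, e3, e4, e5, e6, e7, e8, e9]
    show h τ i - ((0 : Fin m → ℝ) i + h 0 i + (h τ i - h 0 i)) = (0 : Fin m → ℝ) i
    simp
  have hdc : Continuous fun u => x u - (y u + u0 + z u) :=
    hxc.sub ((hyc.add continuous_const).add hzc)
  have huniq := St4.uniqueness hp hn hγ hρ t0 hdc hd0 hdD t0 ht0 le_rfl
  have hxeq : x t0 = y t0 + u0 + z t0 := by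
    have := sub_eq_zero.1 huniq
    exact this
  -- final estimate
  have hyst := hstab y hyc hyBU hyD t0 ht0
  have hy_final : ‖y t0‖ ≤ c t0 * supNorm m φ + A * (κ * H) := by
    have h1 : c t0 * supNorm m y ≤ c t0 * (supNorm m φ + κ * H) :=
      mul_le_mul_of_nonneg_left hysup (hcnn t0 ht0)
    have h2 : c t0 * (κ * H) ≤ A * (κ * H) :=
      mul_le_mul_of_nonneg_right (hA t0 ht0) hu0'
    nlinarith [hyst]
  calc ‖x t0‖ = ‖y t0 + u0 + z t0‖ := by rw [hxeq]
    _ ≤ ‖y t0‖ + ‖u0‖ + ‖z t0‖ :=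
      (norm_add_le _ _).trans (add_le_add_left (norm_add_le _ _) _)
    _ ≤ (c t0 * supNorm m φ + A * (κ * H)) + κ * H + K * (2*H) := by
        linarith [hy_final, hu0, hzK t0]
    _ = c t0 * supNorm m φ + (A * κ + κ + 2*K) * H := by ring
    _ ≤ c t0 * supNorm m φ + k * H := by
        have : (A * κ + κ + 2*K) * H ≤ k * H :=
          mul_le_mul_of_nonneg_right (by rw [hkdef]; linarith) hH0
        linarith
end

section
/- If D is stable, then there is a constant k > 0 such that for all h ∈ BU and x^h ∈ BU satisfying Dx^h_s = h(s) for every s ≤ 0, one has ‖x^h‖_∞ ≤ k‖h‖_∞. -/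
open MeasureTheory Filter Set

/-!
Write `D x = x 0 - L x`. Stability makes `v ↦ D v` injective on constants, hence invertible with
some bound `C`. Fix `s₀ ≤ 0`, choose `T` with `c T ≤ 1/2`, put `σ = s₀ - T` and pick a
constant `v` with `D v = h σ`. The homogeneous solution `z` with history `xh_σ - v` exists, and
stability gives `‖z T‖ ≤ (‖xh‖ + C ‖h‖) / 2`. The difference `w = xh (σ + ·) - z` has history `v`
and satisfies `D w_t = h (σ + t)`, so `‖w T‖ ≤ K ‖h‖`. As `xh s₀ = w T + z T`, taking the
supremum over `s₀` gives `‖xh‖ ≤ ‖xh‖ / 2 + K' ‖h‖`.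

Existence of `z` and the bound on `w` both work in the weighted norm `sup_t e^{-rt} ‖·‖`: since
`|ν|({0}) = 0`, dominated convergence makes `∫ e^{rs} d|ν|(s)` small for large `r`, so the delay
term is a small perturbation.
-/

open scoped Topology BoundedContinuousFunction

namespace NeutralOperator

variable {m : ℕ} (νp νn : Fin m → Fin m → Measure ℝ)

noncomputable def integralPart (x : ℝ → Fin m → ℝ) : Fin m → ℝ :=
  fun i => ∑ j, ((∫ s in Iic 0, x s j ∂νp i j) - ∫ s in Iic 0, x s j ∂νn i j)

lemma Dop_eq_sub_integralPart (x : ℝ → Fin m → ℝ) :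
    Dop m νp νn x = x 0 - integralPart νp νn x := rfl

noncomputable def variation : Measure ℝ := ∑ i, ∑ j, (νp i j + νn i j)

instance [∀ i j, IsFiniteMeasure (νp i j)] [∀ i j, IsFiniteMeasure (νn i j)] :
    IsFiniteMeasure (variation νp νn) := by
  unfold variation; infer_instance

lemma add_le_variation (i j : Fin m) : νp i j + νn i j ≤ variation νp νn :=
  calc νp i j + νn i j ≤ ∑ j', (νp i j' + νn i j') :=
        Finset.single_le_sum (f := fun j' => νp i j' + νn i j')
          (fun _ _ => Measure.zero_le _) (Finset.mem_univ j)
    _ ≤ variation νp νn :=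
        Finset.single_le_sum (f := fun i' => ∑ j', (νp i' j' + νn i' j'))
          (fun _ _ => Measure.zero_le _) (Finset.mem_univ i)

lemma pos_le_variation (i j : Fin m) : νp i j ≤ variation νp νn :=
  (Measure.le_add_right le_rfl).trans (add_le_variation νp νn i j)

lemma neg_le_variation (i j : Fin m) : νn i j ≤ variation νp νn :=
  (Measure.le_add_left le_rfl).trans (add_le_variation νp νn i j)

lemma setIntegral_variation {g : ℝ → ℝ} {s : Set ℝ}
    (hg : IntegrableOn g s (variation νp νn)) :
    ∫ x in s, g x ∂variation νp νn =
      ∑ i, ∑ j, ((∫ x in s, g x ∂νp i j) + ∫ x in s, g x ∂νn i j) := by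
  have hrestrict : (variation νp νn).restrict s =
      ∑ i, ∑ j, ((νp i j).restrict s + (νn i j).restrict s) := by
    simp only [variation, ← Measure.restrictₗ_apply, map_sum, map_add]
  have hp i j : Integrable g ((νp i j).restrict s) :=
    hg.mono_measure (pos_le_variation νp νn i j)
  have hn i j : Integrable g ((νn i j).restrict s) :=
    hg.mono_measure (neg_le_variation νp νn i j)
  rw [hrestrict, integral_finsetSum_measure fun i _ =>
    integrable_finsetSum_measure.2 fun j _ => (hp i j).add_measure (hn i j)]
  refine Finset.sum_congr rfl fun i _ => ?_
  rw [integral_finsetSum_measure fun j _ => (hp i j).add_measure (hn i j)]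
  exact Finset.sum_congr rfl fun j _ => integral_add_measure (hp i j) (hn i j)

lemma norm_integralPart_le {y : ℝ → Fin m → ℝ} {g : ℝ → ℝ}
    (hg : IntegrableOn g (Iic 0) (variation νp νn)) (hy : ∀ s ≤ 0, ‖y s‖ ≤ g s) :
    ‖integralPart νp νn y‖ ≤ ∫ s in Iic 0, g s ∂variation νp νn := by
  have hg0 : ∀ s ∈ Iic (0:ℝ), 0 ≤ g s := fun s hs => (norm_nonneg _).trans (hy s hs)
  have hbound : ∀ μ ≤ variation νp νn, ∀ j,
      ‖∫ s in Iic 0, y s j ∂μ‖ ≤ ∫ s in Iic 0, g s ∂μ := fun μ hμ j =>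
    norm_integral_le_of_norm_le (hg.mono_measure hμ) <|
      (ae_restrict_iff' measurableSet_Iic).2 <| ae_of_all _ fun s hs =>
        (norm_le_pi_norm (y s) j).trans (hy s hs)
  have hnonneg : ∀ μ : Measure ℝ, 0 ≤ ∫ s in Iic 0, g s ∂μ := fun μ =>
    setIntegral_nonneg measurableSet_Iic hg0
  rw [pi_norm_le_iff_of_nonneg (setIntegral_nonneg measurableSet_Iic hg0),
    setIntegral_variation νp νn hg]
  intro i
  calc ‖integralPart νp νn y i‖
      ≤ ∑ j, ((∫ s in Iic 0, g s ∂νp i j) + ∫ s in Iic 0, g s ∂νn i j) :=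
        (norm_sum_le _ _).trans <| Finset.sum_le_sum fun j _ =>
          (norm_sub_le _ _).trans <| add_le_add (hbound _ (pos_le_variation νp νn i j) j)
            (hbound _ (neg_le_variation νp νn i j) j)
    _ ≤ ∑ i', ∑ j, ((∫ s in Iic 0, g s ∂νp i' j) + ∫ s in Iic 0, g s ∂νn i' j) :=
        Finset.single_le_sum
          (f := fun i' => ∑ j, ((∫ s in Iic 0, g s ∂νp i' j) + ∫ s in Iic 0, g s ∂νn i' j))
          (fun i' _ => Finset.sum_nonneg fun j _ => add_nonneg (hnonneg _) (hnonneg _))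
          (Finset.mem_univ i)

lemma integralPart_congr {y y' : ℝ → Fin m → ℝ} (h : EqOn y y' (Iic 0)) :
    integralPart νp νn y = integralPart νp νn y' := by
  have hint : ∀ (μ : Measure ℝ) j,
      ∫ s in Iic 0, y s j ∂μ = ∫ s in Iic 0, y' s j ∂μ :=
    fun μ j => setIntegral_congr_fun measurableSet_Iic fun s hs => by rw [h hs]
  funext i
  simp only [integralPart, hint]

lemma integralPart_sub {y y' : ℝ → Fin m → ℝ}
    (hy : IntegrableOn y (Iic 0) (variation νp νn))
    (hy' : IntegrableOn y' (Iic 0) (variation νp νn)) :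
    integralPart νp νn (y - y') = integralPart νp νn y - integralPart νp νn y' := by
  have hsub : ∀ μ ≤ variation νp νn, ∀ j, ∫ s in Iic 0, (y s j - y' s j) ∂μ =
      (∫ s in Iic 0, y s j ∂μ) - ∫ s in Iic 0, y' s j ∂μ := fun μ hμ j =>
    integral_sub ((hy.mono_measure hμ).eval j) ((hy'.mono_measure hμ).eval j)
  funext i
  simp only [integralPart, Pi.sub_apply, ← Finset.sum_sub_distrib]
  refine Finset.sum_congr rfl fun j _ => ?_
  rw [hsub _ (pos_le_variation νp νn i j), hsub _ (neg_le_variation νp νn i j)]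
  ring

lemma continuous_integralPart_shift [IsFiniteMeasure (variation νp νn)]
    {y : ℝ → Fin m → ℝ} (hy : Continuous y) (hbdd : ∀ a, ∃ C, ∀ t ≤ a, ‖y t‖ ≤ C) :
    Continuous fun τ => integralPart νp νn (shift m y τ) := by
  have hint : ∀ μ ≤ variation νp νn, ∀ j,
      Continuous fun τ => ∫ s in Iic 0, y (τ + s) j ∂μ := by
    intro μ hμ j
    have : IsFiniteMeasure (μ.restrict (Iic 0)) :=
      isFiniteMeasure_of_le _ (Measure.restrict_mono subset_rfl hμ)
    rw [continuous_iff_continuousAt]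
    intro τ₀
    obtain ⟨C, hC⟩ := hbdd (τ₀ + 1)
    refine continuousAt_of_dominated (bound := fun _ => C) ?_ ?_ (integrable_const C) ?_
    · exact Eventually.of_forall fun τ => ((continuous_apply j).comp
        (hy.comp (continuous_const.add continuous_id))).aestronglyMeasurable
    · filter_upwards [Iio_mem_nhds (lt_add_one τ₀)] with τ hτ
      rw [ae_restrict_iff' measurableSet_Iic]
      refine ae_of_all _ fun s hs => (norm_le_pi_norm (y (τ + s)) j).trans (hC _ ?_)
      linarith [mem_Iio.1 hτ, mem_Iic.1 hs]
    · exact ae_of_all _ fun s => ((continuous_apply j).comp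
        (hy.comp (continuous_id.add continuous_const))).continuousAt
  exact continuous_pi fun i => continuous_finsetSum _ fun j _ =>
    (hint _ (pos_le_variation νp νn i j) j).sub (hint _ (neg_le_variation νp νn i j) j)

lemma exp_neg_mul_exp (x : ℝ) : Real.exp (-x) * Real.exp x = 1 := by
  rw [← Real.exp_add, neg_add_cancel, Real.exp_zero]

noncomputable def expMoment (μ : Measure ℝ) (r : ℝ) : ℝ :=
  ∫ s in Iic 0, Real.exp (r * s) ∂μ

lemma tendsto_expMoment_atTop (μ : Measure ℝ) [IsFiniteMeasure μ] (h0 : μ {0} = 0) :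
    Tendsto (expMoment μ) atTop (𝓝 0) := by
  show Tendsto (fun r => ∫ s in Iic 0, Real.exp (r * s) ∂μ) atTop (𝓝 0)
  have hlim : ∀ᵐ s ∂μ.restrict (Iic 0),
      Tendsto (fun r => Real.exp (r * s)) atTop (𝓝 0) := by
    have hne : ∀ᵐ s ∂μ, s ≠ 0 := measure_eq_zero_iff_ae_notMem.1 h0
    filter_upwards [ae_restrict_of_ae hne, ae_restrict_mem measurableSet_Iic] with s hs hs'
    exact Real.tendsto_exp_atBot.comp
      (tendsto_id.atTop_mul_const_of_neg (lt_of_le_of_ne hs' hs))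
  simpa using tendsto_integral_filter_of_dominated_convergence (fun _ => 1)
    (Eventually.of_forall fun r =>
      (by fun_prop : Continuous fun s => Real.exp (r * s)).aestronglyMeasurable)
    (eventually_ge_atTop 0 |>.mono fun r hr => (ae_restrict_iff' measurableSet_Iic).2 <|
      ae_of_all _ fun s hs => by
        rw [Real.norm_eq_abs, abs_of_pos (Real.exp_pos _), Real.exp_le_one_iff]
        exact mul_nonpos_of_nonneg_of_nonpos hr hs)
    (integrable_const 1) hlim

lemma integrableOn_Iic_of_continuousOn {E : Type*} [NormedAddCommGroup E] (μ : Measure ℝ)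
    [IsFiniteMeasure μ] {f : ℝ → E} {C : ℝ} (hf : ContinuousOn f (Iic 0))
    (hC : ∀ s ≤ 0, ‖f s‖ ≤ C) : IntegrableOn f (Iic 0) μ :=
  .of_bound (measure_lt_top _ _) (hf.aestronglyMeasurable measurableSet_Iic) C
    ((ae_restrict_iff' measurableSet_Iic).2 (ae_of_all _ hC))

lemma integrableOn_exp_mul (μ : Measure ℝ) [IsFiniteMeasure μ] {r : ℝ} (hr : 0 ≤ r) :
    IntegrableOn (fun s => Real.exp (r * s)) (Iic 0) μ :=
  integrableOn_Iic_of_continuousOn μ (by fun_prop) fun s hs => by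
    rw [Real.norm_eq_abs, abs_of_pos (Real.exp_pos _), Real.exp_le_one_iff]
    exact mul_nonpos_of_nonneg_of_nonpos hr hs

lemma norm_integralPart_le_of_le_exp [IsFiniteMeasure (variation νp νn)]
    {y : ℝ → Fin m → ℝ} {A c r : ℝ} (hr : 0 ≤ r) (hy : ∀ s ≤ 0, ‖y s‖ ≤ A + c * Real.exp (r * s)) :
    ‖integralPart νp νn y‖ ≤
      A * (variation νp νn).real (Iic 0) + c * expMoment (variation νp νn) r := by
  have hconst : IntegrableOn (fun _ => A) (Iic 0) (variation νp νn) :=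
    integrableOn_const (measure_ne_top _ _)
  have hexp : IntegrableOn (fun s => c * Real.exp (r * s)) (Iic 0) (variation νp νn) :=
    (integrableOn_exp_mul (variation νp νn) hr).const_mul c
  refine (norm_integralPart_le νp νn (hconst.add hexp) hy).trans_eq ?_
  rw [Pi.add_def, integral_add hconst hexp, setIntegral_const, integral_const_mul, expMoment,
    smul_eq_mul, mul_comm]

lemma Dop_sub [IsFiniteMeasure (variation νp νn)] {y y' : ℝ → Fin m → ℝ}
    (hy : IntegrableOn y (Iic 0) (variation νp νn))
    (hy' : IntegrableOn y' (Iic 0) (variation νp νn)) :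
    Dop m νp νn (y - y') = Dop m νp νn y - Dop m νp νn y' := by
  simp only [Dop_eq_sub_integralPart, integralPart_sub νp νn hy hy', Pi.sub_apply]
  abel

noncomputable def massMatrix : Matrix (Fin m) (Fin m) ℝ :=
  Matrix.of fun i j => (νp i j).real (Iic 0) - (νn i j).real (Iic 0)

lemma Dop_const (v : Fin m → ℝ) :
    Dop m νp νn (fun _ => v) =
      ((LinearMap.id - (massMatrix νp νn).mulVecLin : (Fin m → ℝ) →ₗ[ℝ] Fin m → ℝ) v) := by
  funext i
  simp only [Dop, setIntegral_const, smul_eq_mul, LinearMap.sub_apply, LinearMap.id_apply,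
    Matrix.mulVecLin_apply, Matrix.mulVec, dotProduct, massMatrix, Matrix.of_apply, Pi.sub_apply,
    sub_mul]

lemma exists_bounded_const_preimage (hinj : ∀ v, Dop m νp νn (fun _ => v) = 0 → v = 0) :
    ∃ C, 0 ≤ C ∧ ∀ w, ∃ v, Dop m νp νn (fun _ => v) = w ∧ ‖v‖ ≤ C * ‖w‖ := by
  set f : (Fin m → ℝ) →ₗ[ℝ] Fin m → ℝ := LinearMap.id - (massMatrix νp νn).mulVecLin
  have hker : LinearMap.ker f = ⊥ :=
    LinearMap.ker_eq_bot'.2 fun v hv => hinj v (by rw [Dop_const]; exact hv)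
  obtain ⟨K, -, hK⟩ := f.exists_antilipschitzWith hker
  have hsurj := LinearMap.injective_iff_surjective.1 (LinearMap.ker_eq_bot.1 hker)
  refine ⟨K, K.2, fun w => ?_⟩
  obtain ⟨v, rfl⟩ := hsurj w
  exact ⟨v, Dop_const νp νn v, hK.le_mul_norm (map_zero f) v⟩

section Existence

variable {p : ℝ → Fin m → ℝ} {r : ℝ}

/-- The weight `e^{rt}` turns the equation into a contraction on bounded `u` once
`expMoment (variation νp νn) r` is small. -/
noncomputable def extension (p : ℝ → Fin m → ℝ) (r : ℝ) (u : ℝ →ᵇ (Fin m → ℝ)) :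
    ℝ → Fin m → ℝ :=
  fun t => p (min t 0) + Real.exp (r * max t 0) • (u (max t 0) - u 0)

lemma extension_of_nonpos (u : ℝ →ᵇ (Fin m → ℝ)) {t : ℝ} (ht : t ≤ 0) :
    extension p r u t = p t := by
  simp [extension, min_eq_left ht, max_eq_right ht]

lemma extension_of_nonneg (u : ℝ →ᵇ (Fin m → ℝ)) {t : ℝ} (ht : 0 ≤ t) :
    extension p r u t = p 0 + Real.exp (r * t) • (u t - u 0) := by
  simp [extension, min_eq_right ht, max_eq_left ht]

lemma continuous_extension (hp : ContinuousOn p (Iic 0)) (u : ℝ →ᵇ (Fin m → ℝ)) :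
    Continuous (extension p r u) :=
  (hp.comp_continuous (continuous_id.min continuous_const) fun t => min_le_right t 0).add
    ((Real.continuous_exp.comp (continuous_const.mul (continuous_id.max continuous_const))).smul
      ((u.continuous.comp (continuous_id.max continuous_const)).sub continuous_const))

lemma norm_extension_le {B : ℝ} (hB : ∀ t ≤ 0, ‖p t‖ ≤ B) (hr : 0 ≤ r)
    (u : ℝ →ᵇ (Fin m → ℝ)) {a t : ℝ} (ha : 0 ≤ a) (ht : t ≤ a) :
    ‖extension p r u t‖ ≤ (B + 2 * ‖u‖) * Real.exp (r * a) := by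
  have hexp : Real.exp (r * max t 0) ≤ Real.exp (r * a) :=
    Real.exp_le_exp.2 (mul_le_mul_of_nonneg_left (max_le ht ha) hr)
  have hone : 1 ≤ Real.exp (r * a) := Real.one_le_exp (mul_nonneg hr ha)
  have hB0 : 0 ≤ B := (norm_nonneg _).trans (hB 0 le_rfl)
  have hu : ‖u (max t 0) - u 0‖ ≤ 2 * ‖u‖ :=
    (norm_sub_le _ _).trans (by linarith [u.norm_coe_le_norm (max t 0), u.norm_coe_le_norm 0])
  calc ‖extension p r u t‖
      ≤ ‖p (min t 0)‖ + Real.exp (r * max t 0) * ‖u (max t 0) - u 0‖ := by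
        refine (norm_add_le _ _).trans_eq ?_
        rw [norm_smul, Real.norm_eq_abs, abs_of_pos (Real.exp_pos _)]
    _ ≤ B * Real.exp (r * a) + Real.exp (r * a) * (2 * ‖u‖) := by
        gcongr
        · exact (hB _ (min_le_right t 0)).trans (le_mul_of_one_le_right hB0 hone)
    _ = (B + 2 * ‖u‖) * Real.exp (r * a) := by ring

lemma norm_extension_sub_le (u u' : ℝ →ᵇ (Fin m → ℝ)) (t : ℝ) :
    ‖extension p r u t - extension p r u' t‖ ≤ 2 * dist u u' * Real.exp (r * t) := by
  rcases le_total t 0 with ht | ht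
  · rw [extension_of_nonpos u ht, extension_of_nonpos u' ht, sub_self, norm_zero]
    positivity
  · rw [extension_of_nonneg u ht, extension_of_nonneg u' ht, add_sub_add_left_eq_sub, ← smul_sub,
      norm_smul, Real.norm_eq_abs, abs_of_pos (Real.exp_pos _), mul_comm]
    gcongr
    calc ‖u t - u 0 - (u' t - u' 0)‖ = ‖(u t - u' t) - (u 0 - u' 0)‖ := by abel_nf
      _ ≤ dist (u t) (u' t) + dist (u 0) (u' 0) := by
          rw [dist_eq_norm, dist_eq_norm]; exact norm_sub_le _ _
      _ ≤ 2 * dist u u' := by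
          linarith [u.dist_coe_le_dist (g := u') t, u.dist_coe_le_dist (g := u') 0]

variable [IsFiniteMeasure (variation νp νn)] {B : ℝ}

lemma integrableOn_shift_extension (hp : ContinuousOn p (Iic 0)) (hB : ∀ t ≤ 0, ‖p t‖ ≤ B)
    (hr : 0 ≤ r) (u : ℝ →ᵇ (Fin m → ℝ)) {τ : ℝ} (hτ : 0 ≤ τ) :
    IntegrableOn (shift m (extension p r u) τ) (Iic 0) (variation νp νn) :=
  integrableOn_Iic_of_continuousOn _
    ((continuous_extension hp u).comp (continuous_const_add τ)).continuousOn
    fun s hs => norm_extension_le hB hr u hτ (by linarith)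

lemma norm_integralPart_shift_extension_le (hB : ∀ t ≤ 0, ‖p t‖ ≤ B) (hr : 0 ≤ r)
    (u : ℝ →ᵇ (Fin m → ℝ)) {τ : ℝ} (hτ : 0 ≤ τ) :
    ‖integralPart νp νn (shift m (extension p r u) τ)‖ ≤
      (B + 2 * ‖u‖) * Real.exp (r * τ) * (variation νp νn).real (Iic 0) := by
  refine (norm_integralPart_le_of_le_exp νp νn
    (A := (B + 2 * ‖u‖) * Real.exp (r * τ)) (c := 0) hr fun s hs => ?_).trans_eq (by ring)
  rw [zero_mul, add_zero]
  exact norm_extension_le hB hr u hτ (show τ + s ≤ τ by linarith)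

/-- The map whose fixed points `u` make `extension p r u` a solution of `D x_t = 0`, `t ≥ 0`. -/
noncomputable def picardFun (p : ℝ → Fin m → ℝ) (r : ℝ) (u : ℝ →ᵇ (Fin m → ℝ)) :
    ℝ → Fin m → ℝ :=
  fun t => Real.exp (-(r * max t 0)) •
    (integralPart νp νn (shift m (extension p r u) (max t 0)) - p 0)

lemma continuous_picardFun (hp : ContinuousOn p (Iic 0)) (hB : ∀ t ≤ 0, ‖p t‖ ≤ B)
    (hr : 0 ≤ r) (u : ℝ →ᵇ (Fin m → ℝ)) : Continuous (picardFun νp νn p r u) := by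
  have hbdd : ∀ a, ∃ C, ∀ t ≤ a, ‖extension p r u t‖ ≤ C := fun a =>
    ⟨_, fun t ht => norm_extension_le hB hr u (le_max_right a 0) (ht.trans (le_max_left a 0))⟩
  exact (Real.continuous_exp.comp
      (continuous_const.mul (continuous_id.max continuous_const)).neg).smul
    (((continuous_integralPart_shift νp νn (continuous_extension hp u) hbdd).comp
      (continuous_id.max continuous_const)).sub continuous_const)

lemma norm_picardFun_le (hB : ∀ t ≤ 0, ‖p t‖ ≤ B) (hr : 0 ≤ r) (u : ℝ →ᵇ (Fin m → ℝ))
    (t : ℝ) :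
    ‖picardFun νp νn p r u t‖ ≤ (B + 2 * ‖u‖) * (variation νp νn).real (Iic 0) + B := by
  set τ := max t 0
  have hτ : 0 ≤ τ := le_max_right t 0
  have hexp : Real.exp (-(r * τ)) ≤ 1 := Real.exp_le_one_iff.2 (by nlinarith)
  rw [picardFun, norm_smul, Real.norm_eq_abs, abs_of_pos (Real.exp_pos _)]
  calc Real.exp (-(r * τ)) * ‖integralPart νp νn (shift m (extension p r u) τ) - p 0‖
      ≤ Real.exp (-(r * τ)) *
          ((B + 2 * ‖u‖) * Real.exp (r * τ) * (variation νp νn).real (Iic 0) + B) := by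
        gcongr
        exact (norm_sub_le _ _).trans (add_le_add
          (norm_integralPart_shift_extension_le νp νn hB hr u hτ) (hB 0 le_rfl))
    _ = (B + 2 * ‖u‖) * (variation νp νn).real (Iic 0) + Real.exp (-(r * τ)) * B := by
        linear_combination
          ((B + 2 * ‖u‖) * (variation νp νn).real (Iic 0)) * exp_neg_mul_exp (r * τ)
    _ ≤ (B + 2 * ‖u‖) * (variation νp νn).real (Iic 0) + B := by
        gcongr
        exact mul_le_of_le_one_left ((norm_nonneg _).trans (hB 0 le_rfl)) hexp

noncomputable def picardMap (hp : ContinuousOn p (Iic 0)) (hB : ∀ t ≤ 0, ‖p t‖ ≤ B)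
    (hr : 0 ≤ r) (u : ℝ →ᵇ (Fin m → ℝ)) : ℝ →ᵇ (Fin m → ℝ) :=
  .ofNormedAddCommGroup (picardFun νp νn p r u) (continuous_picardFun νp νn hp hB hr u) _
    (norm_picardFun_le νp νn hB hr u)

lemma picardMap_contracting (hp : ContinuousOn p (Iic 0)) (hB : ∀ t ≤ 0, ‖p t‖ ≤ B)
    (hr : 0 ≤ r) (hρ : expMoment (variation νp νn) r ≤ 1 / 4) :
    ContractingWith (1 / 2) (picardMap νp νn hp hB hr) := by
  refine ⟨by rw [← NNReal.coe_lt_coe]; norm_num, LipschitzWith.of_dist_le_mul fun u u' => ?_⟩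
  rw [NNReal.coe_div, NNReal.coe_one, NNReal.coe_two,
    BoundedContinuousFunction.dist_le (by positivity)]
  intro t
  set τ := max t 0
  have hτ : 0 ≤ τ := le_max_right t 0
  have hdiff : integralPart νp νn (shift m (extension p r u) τ) -
      integralPart νp νn (shift m (extension p r u') τ) =
      integralPart νp νn (shift m (extension p r u) τ - shift m (extension p r u') τ) :=
    (integralPart_sub νp νn (integrableOn_shift_extension νp νn hp hB hr u hτ)
      (integrableOn_shift_extension νp νn hp hB hr u' hτ)).symm
  have hbound := norm_integralPart_le_of_le_exp νp νn (A := 0)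
    (c := 2 * dist u u' * Real.exp (r * τ)) hr
    (y := shift m (extension p r u) τ - shift m (extension p r u') τ) fun s _ => by
      rw [zero_add, mul_assoc, ← Real.exp_add, ← mul_add]
      exact norm_extension_sub_le u u' (τ + s)
  calc dist (picardMap νp νn hp hB hr u t) (picardMap νp νn hp hB hr u' t)
      = Real.exp (-(r * τ)) * ‖integralPart νp νn
          (shift m (extension p r u) τ - shift m (extension p r u') τ)‖ := by
        rw [dist_eq_norm]
        change ‖picardFun νp νn p r u t - picardFun νp νn p r u' t‖ = _
        rw [picardFun, picardFun, ← smul_sub, sub_sub_sub_cancel_right, hdiff, norm_smul,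
          Real.norm_eq_abs, abs_of_pos (Real.exp_pos _)]
    _ ≤ Real.exp (-(r * τ)) *
          (0 * (variation νp νn).real (Iic 0) +
            2 * dist u u' * Real.exp (r * τ) * expMoment (variation νp νn) r) := by
        gcongr
    _ = 2 * dist u u' * expMoment (variation νp νn) r := by
        linear_combination
          (2 * dist u u' * expMoment (variation νp νn) r) * exp_neg_mul_exp (r * τ)
    _ ≤ 1 / 2 * dist u u' := by nlinarith [dist_nonneg (x := u) (y := u')]

theorem exists_solution_of_Dop_eq_zero (h0 : variation νp νn {0} = 0)
    (hp : ContinuousOn p (Iic 0)) (hB : ∀ t ≤ 0, ‖p t‖ ≤ B) (hD : Dop m νp νn p = 0) :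
    ∃ z : ℝ → Fin m → ℝ, Continuous z ∧ EqOn z p (Iic 0) ∧
      ∀ t, 0 ≤ t → Dop m νp νn (shift m z t) = 0 := by
  obtain ⟨r, hρ, hr⟩ := ((tendsto_expMoment_atTop _ h0).eventually_le_const
    (by norm_num : (0:ℝ) < 1 / 4)).and (eventually_ge_atTop 0) |>.exists
  have hcontr := picardMap_contracting νp νn hp hB hr hρ
  set u := ContractingWith.fixedPoint _ hcontr
  have hu : ∀ t, picardFun νp νn p r u t = u t := fun t =>
    congrArg (· t) (ContractingWith.fixedPoint_isFixedPt hcontr)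
  have hL0 : integralPart νp νn (shift m (extension p r u) 0) = p 0 := by
    rw [integralPart_congr νp νn (y' := p) fun s hs => by
      simpa [shift] using extension_of_nonpos u (mem_Iic.1 hs)]
    rw [Dop_eq_sub_integralPart, sub_eq_zero] at hD
    exact hD.symm
  have hu0 : u 0 = 0 := by
    rw [← hu, picardFun, max_self, hL0, sub_self, smul_zero]
  refine ⟨extension p r u, continuous_extension hp u, fun t ht => extension_of_nonpos u ht,
    fun t ht => ?_⟩
  rw [Dop_eq_sub_integralPart, sub_eq_zero, shift, add_zero, extension_of_nonneg u ht, hu0,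
    sub_zero, ← hu, picardFun, max_eq_left ht, smul_smul, ← Real.exp_add, add_neg_cancel,
    Real.exp_zero, one_smul, add_sub_cancel]

end Existence

lemma exp_neg_mul_norm_le [IsFiniteMeasure (variation νp νn)] {r : ℝ} (hr : 0 ≤ r)
    {w : ℝ → Fin m → ℝ} {T A H W : ℝ} (hA : ∀ t ≤ 0, ‖w t‖ ≤ A)
    (hH : ∀ t ∈ Icc 0 T, ‖Dop m νp νn (shift m w t)‖ ≤ H)
    (hW : ∀ t ∈ Icc 0 T, Real.exp (-(r * t)) * ‖w t‖ ≤ W) {t : ℝ} (ht : t ∈ Icc 0 T) :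
    Real.exp (-(r * t)) * ‖w t‖ ≤
      A * (variation νp νn).real (Iic 0) + H + W * expMoment (variation νp νn) r := by
  set V := (variation νp νn).real (Iic 0)
  have hW0 : 0 ≤ W := (by positivity : 0 ≤ Real.exp (-(r * t)) * ‖w t‖).trans (hW t ht)
  have hwt : ‖w t‖ ≤ H + ‖integralPart νp νn (shift m w t)‖ := by
    have e : w t = Dop m νp νn (shift m w t) + integralPart νp νn (shift m w t) := by
      rw [Dop_eq_sub_integralPart, shift, add_zero, sub_add_cancel]
    rw [e]
    exact (norm_add_le _ _).trans (by linarith [hH t ht])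
  have hL : ‖integralPart νp νn (shift m w t)‖ ≤
      A * V + W * Real.exp (r * t) * expMoment (variation νp νn) r := by
    refine norm_integralPart_le_of_le_exp νp νn hr fun s hs => ?_
    change ‖w (t + s)‖ ≤ _
    rw [mul_assoc, ← Real.exp_add, ← mul_add]
    rcases le_total (t + s) 0 with hts | hts
    · exact (hA _ hts).trans (le_add_of_nonneg_right (by positivity))
    · calc ‖w (t + s)‖ = Real.exp (r * (t + s)) * (Real.exp (-(r * (t + s))) * ‖w (t + s)‖) := by
            rw [← mul_assoc, mul_comm _ (Real.exp _), exp_neg_mul_exp, one_mul]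
        _ ≤ Real.exp (r * (t + s)) * W := by gcongr; exact hW _ ⟨hts, by linarith [ht.2]⟩
        _ ≤ A + W * Real.exp (r * (t + s)) := by
            linarith [(norm_nonneg _).trans (hA 0 le_rfl)]
  have hexp : Real.exp (-(r * t)) ≤ 1 := Real.exp_le_one_iff.2 (by nlinarith [ht.1])
  calc Real.exp (-(r * t)) * ‖w t‖ ≤ Real.exp (-(r * t)) *
        (H + (A * V + W * Real.exp (r * t) * expMoment (variation νp νn) r)) := by
        gcongr
        exact hwt.trans (by linarith)
    _ = Real.exp (-(r * t)) * (A * V + H) + W * expMoment (variation νp νn) r := by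
        linear_combination (W * expMoment (variation νp νn) r) * exp_neg_mul_exp (r * t)
    _ ≤ A * V + H + W * expMoment (variation νp νn) r := by
        gcongr
        refine mul_le_of_le_one_left (add_nonneg (mul_nonneg ?_ measureReal_nonneg) ?_) hexp
        · exact (norm_nonneg _).trans (hA 0 le_rfl)
        · exact (norm_nonneg _).trans (hH t ht)

/-- With `W = sup_{[0, T]} e^{-rt} ‖w t‖`, `exp_neg_mul_norm_le` gives `W ≤ A V + H + W / 2`. -/
theorem norm_le_of_norm_Dop_shift_le [IsFiniteMeasure (variation νp νn)] {r : ℝ} (hr : 0 ≤ r)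
    (hρ : expMoment (variation νp νn) r ≤ 1 / 2) {w : ℝ → Fin m → ℝ} {T A H : ℝ}
    (hT : 0 ≤ T) (hw : ContinuousOn w (Iic T)) (hA : ∀ t ≤ 0, ‖w t‖ ≤ A)
    (hH : ∀ t ∈ Icc 0 T, ‖Dop m νp νn (shift m w t)‖ ≤ H) :
    ‖w T‖ ≤ 2 * Real.exp (r * T) * (A * (variation νp νn).real (Iic 0) + H) := by
  set f : ℝ → ℝ := fun t => Real.exp (-(r * t)) * ‖w t‖
  have hf : ContinuousOn f (Icc 0 T) :=
    (by fun_prop : Continuous fun t => Real.exp (-(r * t))).continuousOn.mul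
      (hw.mono Icc_subset_Iic_self).norm
  have hbdd : BddAbove (f '' Icc 0 T) := isCompact_Icc.bddAbove_image hf
  set W := sSup (f '' Icc 0 T)
  have hle : ∀ t ∈ Icc 0 T, f t ≤ W := fun t ht => le_csSup hbdd (mem_image_of_mem f ht)
  have hW0 : 0 ≤ W := (by positivity : 0 ≤ f 0).trans (hle 0 ⟨le_rfl, hT⟩)
  have hWle : W ≤ A * (variation νp νn).real (Iic 0) + H + W / 2 :=
    csSup_le ((nonempty_Icc.2 hT).image f) <| forall_mem_image.2 fun t ht =>
      (exp_neg_mul_norm_le νp νn hr hA hH hle ht).trans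
        (by linarith [mul_le_mul_of_nonneg_left hρ hW0])
  calc ‖w T‖ = Real.exp (r * T) * f T := by
        simp only [f]; rw [← mul_assoc, mul_comm _ (Real.exp _), exp_neg_mul_exp, one_mul]
    _ ≤ Real.exp (r * T) * W := by gcongr; exact hle T ⟨hT, le_rfl⟩
    _ ≤ 2 * Real.exp (r * T) * (A * (variation νp νn).real (Iic 0) + H) := by
        nlinarith [Real.exp_pos (r * T)]

end NeutralOperator

section BU

variable {m : ℕ} {x y : ℝ → Fin m → ℝ}

lemma le_supNorm {C : ℝ} (hC : ∀ s ≤ 0, ‖x s‖ ≤ C) {s : ℝ} (hs : s ≤ 0) :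
    ‖x s‖ ≤ supNorm m x :=
  le_ciSup (f := fun s : Iic (0:ℝ) => ‖x s‖) ⟨C, forall_mem_range.2 fun s => hC s s.2⟩
    ⟨s, hs⟩

lemma supNorm_le {C : ℝ} (hC : ∀ s ≤ 0, ‖x s‖ ≤ C) : supNorm m x ≤ C :=
  have : Nonempty (Iic (0:ℝ)) := ⟨⟨0, mem_Iic.2 le_rfl⟩⟩
  ciSup_le fun s => hC s s.2

lemma supNorm_nonneg (x : ℝ → Fin m → ℝ) : 0 ≤ supNorm m x :=
  Real.iSup_nonneg fun _ => norm_nonneg _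

lemma supNorm_const (v : Fin m → ℝ) : supNorm m (fun _ => v) = ‖v‖ :=
  have : Nonempty (Iic (0:ℝ)) := ⟨⟨0, mem_Iic.2 le_rfl⟩⟩
  ciSup_const

lemma IsBU.norm_le_supNorm (hx : IsBU m x) {s : ℝ} (hs : s ≤ 0) : ‖x s‖ ≤ supNorm m x :=
  let ⟨_, hC⟩ := hx.1
  le_supNorm hC hs

lemma IsBU.continuousOn (hx : IsBU m x) : ContinuousOn x (Iic 0) :=
  Metric.continuousOn_iff.2 fun s₀ hs₀ ε hε =>
    let ⟨δ, hδ, hunif⟩ := hx.2 ε hε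
    ⟨δ, hδ, fun s hs hd => by
      rw [dist_eq_norm]; exact hunif s hs s₀ hs₀ (by rwa [Real.dist_eq] at hd)⟩

lemma isBU_const (v : Fin m → ℝ) : IsBU m fun _ => v :=
  ⟨⟨‖v‖, fun _ _ => le_rfl⟩,
    fun ε hε => ⟨1, one_pos, fun _ _ _ _ _ => by simpa using hε⟩⟩

lemma IsBU.congr (hx : IsBU m x) (h : EqOn x y (Iic 0)) : IsBU m y := by
  obtain ⟨⟨C, hC⟩, hunif⟩ := hx
  refine ⟨⟨C, fun s hs => h hs ▸ hC s hs⟩, fun ε hε => ?_⟩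
  obtain ⟨δ, hδ, hδ'⟩ := hunif ε hε
  exact ⟨δ, hδ, fun s hs s' hs' hss' => h hs ▸ h hs' ▸ hδ' s hs s' hs' hss'⟩

lemma IsBU.sub (hx : IsBU m x) (hy : IsBU m y) : IsBU m (x - y) := by
  obtain ⟨⟨C, hC⟩, hx'⟩ := hx
  obtain ⟨⟨C', hC'⟩, hy'⟩ := hy
  refine ⟨⟨C + C', fun s hs => (norm_sub_le _ _).trans (add_le_add (hC s hs) (hC' s hs))⟩,
    fun ε hε => ?_⟩
  obtain ⟨δ, hδ, hδx⟩ := hx' (ε / 2) (half_pos hε)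
  obtain ⟨δ', hδ', hδy⟩ := hy' (ε / 2) (half_pos hε)
  refine ⟨min δ δ', lt_min hδ hδ', fun s hs s' hs' hss' => ?_⟩
  calc ‖(x - y) s - (x - y) s'‖ = ‖(x s - x s') - (y s - y s')‖ := by
        simp only [Pi.sub_apply]; abel_nf
    _ ≤ ‖x s - x s'‖ + ‖y s - y s'‖ := norm_sub_le _ _
    _ < ε / 2 + ε / 2 := add_lt_add (hδx s hs s' hs' (hss'.trans_le (min_le_left _ _)))
        (hδy s hs s' hs' (hss'.trans_le (min_le_right _ _)))
    _ = ε := add_halves ε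

lemma IsBU.shift (hx : IsBU m x) {σ : ℝ} (hσ : σ ≤ 0) : IsBU m (shift m x σ) := by
  obtain ⟨⟨C, hC⟩, hunif⟩ := hx
  refine ⟨⟨C, fun s hs => hC _ (by linarith)⟩, fun ε hε => ?_⟩
  obtain ⟨δ, hδ, hδ'⟩ := hunif ε hε
  exact ⟨δ, hδ, fun s hs s' hs' hss' =>
    hδ' _ (by linarith) _ (by linarith) (by rwa [add_sub_add_left_eq_sub])⟩

lemma exists_bound_Iic_of_continuous {z : ℝ → Fin m → ℝ} (hz : Continuous z) {B : ℝ}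
    (hB : ∀ s ≤ 0, ‖z s‖ ≤ B) (a : ℝ) : ∃ C, ∀ s ≤ a, ‖z s‖ ≤ C := by
  obtain ⟨C, hC⟩ :=
    (isCompact_Icc (a := 0) (b := a)).exists_bound_of_continuousOn hz.continuousOn
  refine ⟨max B C, fun s hs => ?_⟩
  rcases le_total s 0 with hs0 | hs0
  · exact (hB s hs0).trans (le_max_left _ _)
  · exact (hC s ⟨hs0, hs⟩).trans (le_max_right _ _)

end BU

lemma IsStableOp.eq_zero_of_const {m : ℕ} {D : (ℝ → Fin m → ℝ) → Fin m → ℝ}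
    (hD : IsStableOp m D) {v : Fin m → ℝ} (hv : D (fun _ => v) = 0) : v = 0 := by
  obtain ⟨c, -, -, hc, hstab⟩ := hD
  have hle : ∀ t, 0 ≤ t → ‖v‖ ≤ c t * ‖v‖ := fun t ht => by
    simpa [supNorm_const] using hstab _ continuous_const (isBU_const v) (fun _ _ => hv) t ht
  have : ‖v‖ ≤ 0 * ‖v‖ :=
    ge_of_tendsto (hc.mul_const ‖v‖) ((eventually_ge_atTop 0).mono hle)
  exact norm_le_zero_iff.1 (by simpa using this)

namespace NeutralOperator

variable {m : ℕ} (νp νn : Fin m → Fin m → Measure ℝ) [IsFiniteMeasure (variation νp νn)]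

lemma integrableOn_shift_of_isBU {x : ℝ → Fin m → ℝ} (hx : IsBU m x) {σ : ℝ}
    (hσ : σ ≤ 0) :
    IntegrableOn (shift m x σ) (Iic 0) (variation νp νn) :=
  let ⟨⟨_, hC⟩, _⟩ := hx.shift hσ
  integrableOn_Iic_of_continuousOn _ (hx.shift hσ).continuousOn hC

lemma integrableOn_shift_of_continuous {z : ℝ → Fin m → ℝ} (hz : Continuous z) {B : ℝ}
    (hB : ∀ s ≤ 0, ‖z s‖ ≤ B) (τ : ℝ) :
    IntegrableOn (shift m z τ) (Iic 0) (variation νp νn) :=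
  let ⟨C, hC⟩ := exists_bound_Iic_of_continuous hz hB τ
  integrableOn_Iic_of_continuousOn _ (hz.comp (continuous_const_add τ)).continuousOn
    fun s hs => hC _ (by linarith)

lemma Dop_shift_sub_of_Dop_shift_eq_zero {h xh z : ℝ → Fin m → ℝ} (hxh : IsBU m xh)
    (hD : ∀ s ≤ 0, Dop m νp νn (shift m xh s) = h s) (hz : Continuous z) {B : ℝ}
    (hB : ∀ s ≤ 0, ‖z s‖ ≤ B) (hzD : ∀ t, 0 ≤ t → Dop m νp νn (shift m z t) = 0) {σ t : ℝ}
    (ht : 0 ≤ t) (hσt : σ + t ≤ 0) :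
    Dop m νp νn (shift m (shift m xh σ - z) t) = h (σ + t) := by
  have e : shift m (shift m xh σ - z) t = shift m xh (σ + t) - shift m z t := by
    funext s; simp only [shift, Pi.sub_apply, add_assoc]
  rw [e, Dop_sub νp νn (integrableOn_shift_of_isBU νp νn hxh hσt)
    (integrableOn_shift_of_continuous νp νn hz hB t), hD _ hσt, hzD t ht, sub_zero]

theorem norm_apply_le_of_Dop_shift_eq (h0 : variation νp νn {0} = 0) {T cT r C : ℝ}
    (hT : 0 ≤ T)
    (hstab : ∀ x, Continuous x → IsBU m x → (∀ t, 0 ≤ t → Dop m νp νn (shift m x t) = 0) →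
      ‖x T‖ ≤ cT * supNorm m x) (hcT : 0 ≤ cT)
    (hr : 0 ≤ r) (hρ : expMoment (variation νp νn) r ≤ 1 / 2)
    (hC : ∀ w, ∃ v, Dop m νp νn (fun _ => v) = w ∧ ‖v‖ ≤ C * ‖w‖) (hC0 : 0 ≤ C)
    {h xh : ℝ → Fin m → ℝ} (hh : IsBU m h) (hxh : IsBU m xh)
    (hD : ∀ s ≤ 0, Dop m νp νn (shift m xh s) = h s) {s₀ : ℝ} (hs₀ : s₀ ≤ 0) :
    ‖xh s₀‖ ≤ cT * (supNorm m xh + C * supNorm m h) +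
      2 * Real.exp (r * T) *
        (C * supNorm m h * (variation νp νn).real (Iic 0) + supNorm m h) := by
  set σ := s₀ - T
  have hσ : σ ≤ 0 := by linarith
  obtain ⟨v, hv, hvC⟩ := hC (h σ)
  have hvH : ‖v‖ ≤ C * supNorm m h := hvC.trans (by gcongr; exact hh.norm_le_supNorm hσ)
  set p := shift m xh σ - fun _ => v with hpdef
  have hp : IsBU m p := (hxh.shift hσ).sub (isBU_const v)
  have hpD : Dop m νp νn p = 0 := by
    rw [hpdef, Dop_sub νp νn (integrableOn_shift_of_isBU νp νn hxh hσ)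
      (integrableOn_const (measure_ne_top _ _)), hD σ hσ, hv, sub_self]
  obtain ⟨B, hB⟩ := hp.1
  obtain ⟨z, hz, hzp, hzD⟩ := exists_solution_of_Dop_eq_zero νp νn h0 hp.continuousOn hB hpD
  have hzsup : supNorm m z ≤ supNorm m xh + C * supNorm m h := supNorm_le fun s hs => by
    rw [hzp hs]
    exact (norm_sub_le _ _).trans (add_le_add (hxh.norm_le_supNorm (by linarith)) hvH)
  have hzT : ‖z T‖ ≤ cT * (supNorm m xh + C * supNorm m h) :=
    (hstab z hz (hp.congr hzp.symm) hzD).trans (mul_le_mul_of_nonneg_left hzsup hcT)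
  set w := shift m xh σ - z
  have hwv : ∀ t ≤ 0, w t = v := fun t ht => by
    simp only [w, Pi.sub_apply, hzp ht, p, sub_sub_cancel]
  have hwD : ∀ t ∈ Icc 0 T, ‖Dop m νp νn (shift m w t)‖ ≤ supNorm m h := fun t ht => by
    have hσt : σ + t ≤ 0 := by linarith [ht.2]
    rw [Dop_shift_sub_of_Dop_shift_eq_zero νp νn hxh hD hz (fun s hs => hzp hs ▸ hB s hs) hzD
      ht.1 hσt]
    exact hh.norm_le_supNorm hσt
  have hwT := norm_le_of_norm_Dop_shift_le νp νn hr hρ hT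
    ((hxh.continuousOn.comp (continuous_const_add σ).continuousOn fun t ht => by
      simp only [mem_Iic] at ht ⊢; linarith).sub hz.continuousOn)
    (fun t ht => (hwv t ht).symm ▸ hvH) hwD
  have hsplit : xh s₀ = w T + z T := by
    simp only [w, shift, Pi.sub_apply, sub_add_cancel, σ, sub_add_cancel]
  rw [hsplit, add_comm (cT * _)]
  calc ‖w T + z T‖ ≤ ‖w T‖ + ‖z T‖ := norm_add_le _ _
    _ ≤ _ := add_le_add (hwT.trans (by gcongr)) hzT

end NeutralOperator

open NeutralOperator

/-- If `D` is stable, there is `k > 0` such that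
`‖x^h‖_∞ ≤ k ‖h‖_∞` for all `h ∈ BU` and `x^h ∈ BU` with `D x^h_s = h(s)`
for every `s ≤ 0`. -/
theorem statement5 (m : ℕ) (νp νn : Fin m → Fin m → Measure ℝ)
    (hν : NuCond m νp νn) (hst : IsStableOp m (Dop m νp νn)) :
    ∃ k : ℝ, 0 < k ∧
      ∀ h xh : ℝ → Fin m → ℝ, IsBU m h → IsBU m xh →
        (∀ s : ℝ, s ≤ 0 → Dop m νp νn (shift m xh s) = h s) →
        supNorm m xh ≤ k * supNorm m h := by
  obtain ⟨hfp, hfn, hzp, hzn⟩ := hν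
  have : ∀ i j, IsFiniteMeasure (νp i j) := fun i j => ⟨(hfp i j).lt_top⟩
  have : ∀ i j, IsFiniteMeasure (νn i j) := fun i j => ⟨(hfn i j).lt_top⟩
  have h0 : variation νp νn {0} = 0 := by simp [variation, hzp, hzn]
  obtain ⟨C, hC0, hC⟩ := exists_bounded_const_preimage νp νn fun v => hst.eq_zero_of_const
  obtain ⟨r, hρ, hr⟩ := ((tendsto_expMoment_atTop _ h0).eventually_le_const
    (by norm_num : (0:ℝ) < 1 / 2)).and (eventually_ge_atTop 0) |>.exists
  obtain ⟨c, -, hc0, hc, hstab⟩ := hst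
  obtain ⟨T, hcT, hT⟩ := ((hc.eventually_le_const (by norm_num : (0:ℝ) < 1 / 2)).and
    (eventually_ge_atTop 0)).exists
  set V := (variation νp νn).real (Iic 0)
  have hV : 0 ≤ V := measureReal_nonneg
  refine ⟨C + 4 * Real.exp (r * T) * (C * V + 1), by positivity,
    fun h xh hh hxh hD => ?_⟩
  have key := supNorm_le (x := xh) fun s hs => norm_apply_le_of_Dop_shift_eq νp νn h0 hT
    (fun x hx hxBU hxD => hstab x hx hxBU hxD T hT) (hc0 T hT) hr hρ hC hC0 hh hxh hD hs
  have hcT' : c T * (supNorm m xh + C * supNorm m h) ≤ 1 / 2 * (supNorm m xh + C * supNorm m h) :=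
    mul_le_mul_of_nonneg_right hcT
      (add_nonneg (supNorm_nonneg xh) (mul_nonneg hC0 (supNorm_nonneg h)))
  linarith
end
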